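/- arXiv:1804.10915 — 12 statements merged into one kernel-verified Lean document; each statement's English description precedes it below -/
import Mathlib

section
/- For every y ∈ Y₁, the set of support points of y is nonempty. -/
open Set Filter Topology ContinuousMap

/-- `B` together with the norm `nB` is a regular Banach function algebra on the
compact Hausdorff space `X`: it separates points, `nB` is a complete algebra norm
on `B` dominating the sup norm, and the regularity (partition of unity) property holds. -/
structure IsRegularBanachFunctionAlgebra {X : Type*} [TopologicalSpace X] [CompactSpace X]
    [T2Space X] (B : Subalgebra ℂ C(X, ℂ)) (nB : C(X, ℂ) → ℝ) : Prop where
  separates : ∀ x y : X, x ≠ y → ∃ f ∈ B, f x ≠ f y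
  norm_nonneg : ∀ f ∈ B, 0 ≤ nB f
  norm_add_le : ∀ f ∈ B, ∀ g ∈ B, nB (f + g) ≤ nB f + nB g
  norm_smul : ∀ (c : ℂ), ∀ f ∈ B, nB (c • f) = ‖c‖ * nB f
  norm_eq_zero_iff : ∀ f ∈ B, (nB f = 0 ↔ f = 0)
  norm_mul_le : ∀ f ∈ B, ∀ g ∈ B, nB (f * g) ≤ nB f * nB g
  sup_norm_le : ∀ f ∈ B, ‖f‖ ≤ nB f
  complete : ∀ u : ℕ → C(X, ℂ), (∀ n, u n ∈ B) →
    (∀ ε : ℝ, 0 < ε → ∃ N : ℕ, ∀ m ≥ N, ∀ n ≥ N, nB (u m - u n) < ε) →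
    ∃ l ∈ B, ∀ ε : ℝ, 0 < ε → ∃ N : ℕ, ∀ n ≥ N, nB (u n - l) < ε
  regular : ∀ K : Set X, IsCompact K → ∀ (n : ℕ) (U : Fin n → Set X),
    (∀ i, IsOpen (U i)) → K ⊆ ⋃ i, U i →
    ∃ g : Fin n → C(X, ℂ), (∀ i, g i ∈ B) ∧ (∀ i, closure {x | g i x ≠ 0} ⊆ U i) ∧
      ∀ x ∈ K, (∑ i, g i x) = 1

variable {X Y E : Type*} [TopologicalSpace X] [CompactSpace X] [T2Space X]
  [TopologicalSpace Y] [CompactSpace Y] [T2Space Y]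
  [NormedAddCommGroup E] [NormedSpace ℂ E] [CompleteSpace E]
  (A : Submodule ℂ C(X, E))

/-- The cozero set of a function in `A(X,E)`. -/
def coz (f : ↥A) : Set X := {x | (f : C(X, E)) x ≠ 0}

/-- `T` and `S` are jointly separating: `Tf · Sg = 0` whenever `f` and `g`
have disjoint cozero sets. -/
def JointlySeparating (T S : ↥A →ₗ[ℂ] C(Y, ℂ)) : Prop :=
  ∀ f g : ↥A, coz A f ∩ coz A g = ∅ → ∀ y : Y, T f y * S g y = 0

/-- The set `Y₁ = (⋃_f coz(Tf)) ∩ (⋃_f coz(Sf))`. -/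
def Y1 (T S : ↥A →ₗ[ℂ] C(Y, ℂ)) : Set Y :=
  {y | (∃ f : ↥A, T f y ≠ 0) ∧ (∃ f : ↥A, S f y ≠ 0)}

/-- `x` is a support point of `y ∈ Y₁`. -/
def IsSupportPoint (T S : ↥A →ₗ[ℂ] C(Y, ℂ)) (y : Y) (x : X) : Prop :=
  ∀ V ∈ 𝓝 x, ∃ f : ↥A, coz A f ⊆ V ∧ (T f y ≠ 0 ∨ S f y ≠ 0)

/-- **Lemma 3.2.** For every `y ∈ Y₁` the set of support points of `y` is nonempty. -/
theorem supportPoint_nonempty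
    (B : Subalgebra ℂ C(X, ℂ)) (nB : C(X, ℂ) → ℝ)
    (hB : IsRegularBanachFunctionAlgebra B nB)
    (hmod : ∀ g ∈ B, ∀ f : ↥A, g • (f : C(X, E)) ∈ A)
    (T S : ↥A →ₗ[ℂ] C(Y, ℂ)) (hTS : JointlySeparating A T S)
    (y : Y) (hy : y ∈ Y1 A T S) :
    ∃ x : X, IsSupportPoint A T S y x := by
  by_contra h
  push_neg at h
  have hloc : ∀ x : X, ∃ V ∈ 𝓝 x, ∀ f : ↥A, coz A f ⊆ V → T f y = 0 ∧ S f y = 0 := by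
    intro x
    have hx := h x
    unfold IsSupportPoint at hx
    push_neg at hx
    obtain ⟨V, hV, hVf⟩ := hx
    exact ⟨V, hV, fun f hf => ⟨(hVf f hf).1, (hVf f hf).2⟩⟩
  choose V hVnhds hVzero using hloc
  have hcover : (Set.univ : Set X) ⊆ ⋃ x : X, interior (V x) := fun x _ =>
    Set.mem_iUnion.2 ⟨x, mem_interior_iff_mem_nhds.2 (hVnhds x)⟩
  obtain ⟨t, ht⟩ := isCompact_univ.elim_finite_subcover (fun x : X => interior (V x))
    (fun x => isOpen_interior) hcover
  set n := t.card with hn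
  have e : Fin n ≃ {x // x ∈ t} := t.equivFin.symm
  obtain ⟨g, hgB, hgsupp, hgsum⟩ := hB.regular Set.univ isCompact_univ n
    (fun i => interior (V (e i)))
    (fun i => isOpen_interior)
    (by
      intro x _
      have := ht (Set.mem_univ x)
      simp only [Set.mem_iUnion] at this ⊢
      obtain ⟨z, hz, hxz⟩ := this
      exact ⟨e.symm ⟨z, hz⟩, by simpa using hxz⟩)
  have key : ∀ f : ↥A, T f y = 0 := by
    intro f
    set F : Fin n → ↥A := fun i => ⟨g i • (f : C(X, E)), hmod (g i) (hgB i) f⟩ with hF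
    have hsum : f = ∑ i, F i := by
      apply Subtype.ext
      have : ((∑ i, F i : ↥A) : C(X, E)) = ∑ i, (F i : C(X, E)) := by
        simp
      rw [this]
      ext x
      simp only [ContinuousMap.sum_apply, hF]
      have hpt : ∀ i : Fin n, (g i • (f : C(X, E))) x = g i x • (f : C(X, E)) x :=
        fun i => rfl
      simp_rw [hpt]
      rw [← Finset.sum_smul, hgsum x (Set.mem_univ x), one_smul]
    have hzero : ∀ i, T (F i) y = 0 := by
      intro i
      apply (hVzero (e i) (F i) ?_).1
      intro x hx
      have hgx : g i x ≠ 0 := by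
        intro hgi
        apply hx
        show (g i • (f : C(X, E))) x = 0
        simp [hgi]
      exact interior_subset (hgsupp i (subset_closure hgx))
    rw [hsum, map_sum]
    simp only [ContinuousMap.sum_apply]
    exact Finset.sum_eq_zero fun i _ => hzero i
  obtain ⟨⟨f, hf⟩, _⟩ := hy
  exact hf (key f)
end

section
/- Let x ∈ X be a support point of y ∈ Y₁. Then for every neighborhood V of x there exist f, g ∈ A(X,E) such that coz(f) ∪ coz(g) ⊆ V, Tf(y) ≠ 0, and Sg(y) ≠ 0. -/
open Set Filter Topology

variable {X Y E : Type*} [TopologicalSpace X] [CompactSpace X] [T2Space X]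
  [TopologicalSpace Y] [CompactSpace Y] [T2Space Y]
  [NormedAddCommGroup E] [NormedSpace ℂ E] [CompleteSpace E]
  (A : Submodule ℂ C(X, E))

/-- **Lemma 3.3.** If `x` is a support point of `y ∈ Y₁`, then for every neighborhood `V`
of `x` there are `f, g ∈ A(X,E)` with `coz(f) ∪ coz(g) ⊆ V`, `Tf(y) ≠ 0` and `Sg(y) ≠ 0`. -/
theorem exists_pair_of_isSupportPoint
    (B : Subalgebra ℂ C(X, ℂ)) (nB : C(X, ℂ) → ℝ)
    (hB : IsRegularBanachFunctionAlgebra B nB)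
    (hmod : ∀ g ∈ B, ∀ f : ↥A, g • (f : C(X, E)) ∈ A)
    (T S : ↥A →ₗ[ℂ] C(Y, ℂ)) (hTS : JointlySeparating A T S)
    (y : Y) (hy : y ∈ Y1 A T S) (x : X) (hx : IsSupportPoint A T S y x) :
    ∀ V ∈ 𝓝 x, ∃ f g : ↥A, coz A f ∪ coz A g ⊆ V ∧ T f y ≠ 0 ∧ S g y ≠ 0 := by
  intro V hV
  obtain ⟨⟨f₀, hf₀⟩, ⟨g₀, hg₀⟩⟩ := hy
  have hVint : interior V ∈ 𝓝 x := interior_mem_nhds.mpr hV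
  obtain ⟨s, hs_nhds, hs_closed, hsV⟩ := exists_mem_nhds_isClosed_subset hVint
  obtain ⟨h, hhcoz, hhTS⟩ := hx (interior s) (interior_mem_nhds.mpr hs_nhds)
  obtain ⟨gf, hgB, hgsupp, hgone⟩ := hB.regular s hs_closed.isCompact 1
    (fun _ => interior V) (fun _ => isOpen_interior)
    (fun z hz => mem_iUnion.mpr ⟨0, hsV hz⟩)
  set e := gf 0 with he
  have hone : ∀ z ∈ s, e z = 1 := by
    intro z hz
    have := hgone z hz
    simpa [he] using this
  have hsupp : closure {z | e z ≠ 0} ⊆ V := (hgsupp 0).trans interior_subset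
  have hhV : coz A h ⊆ V :=
    hhcoz.trans (interior_subset.trans (hsV.trans interior_subset))
  -- the multiplied element
  have hmem : ∀ w : ↥A, e • (w : C(X, E)) ∈ A := fun w => hmod e (hgB 0) w
  have hcozsub : ∀ w : ↥A, coz A ⟨e • (w : C(X, E)), hmem w⟩ ⊆ V := by
    intro w z hz
    refine hsupp (subset_closure ?_)
    intro h0
    apply hz
    show (e • (w : C(X, E))) z = 0
    show e z • (w : C(X, E)) z = 0
    rw [h0, zero_smul]
  have hdisj : ∀ w : ↥A, coz A (w - ⟨e • (w : C(X, E)), hmem w⟩) ∩ coz A h = ∅ := by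
    intro w
    rw [eq_empty_iff_forall_notMem]
    rintro z ⟨hz1, hz2⟩
    apply hz1
    have hzs : z ∈ s := interior_subset (hhcoz hz2)
    show (((w : C(X, E)) - e • (w : C(X, E))) : C(X, E)) z = 0
    show (w : C(X, E)) z - e z • (w : C(X, E)) z = 0
    rw [hone z hzs, one_smul, sub_self]
  rcases hhTS with hT | hS
  · refine ⟨h, ⟨e • (g₀ : C(X, E)), hmem g₀⟩, ?_, hT, ?_⟩
    · exact union_subset hhV (hcozsub g₀)
    · have h0 : T h y * S (g₀ - ⟨e • (g₀ : C(X, E)), hmem g₀⟩) y = 0 := by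
        have := hdisj g₀
        rw [inter_comm] at this
        exact hTS h _ this y
      have h1 : S (g₀ - ⟨e • (g₀ : C(X, E)), hmem g₀⟩) y = 0 :=
        (mul_eq_zero.mp h0).resolve_left hT
      rw [map_sub, ContinuousMap.sub_apply] at h1
      have : S g₀ y - S ⟨e • (g₀ : C(X, E)), hmem g₀⟩ y = 0 := h1
      intro hc
      rw [hc, sub_zero] at this
      exact hg₀ this
  · refine ⟨⟨e • (f₀ : C(X, E)), hmem f₀⟩, h, ?_, ?_, hS⟩
    · exact union_subset (hcozsub f₀) hhV
    · have h0 : T (f₀ - ⟨e • (f₀ : C(X, E)), hmem f₀⟩) y * S h y = 0 :=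
        hTS _ h (hdisj f₀) y
      have h1 : T (f₀ - ⟨e • (f₀ : C(X, E)), hmem f₀⟩) y = 0 :=
        (mul_eq_zero.mp h0).resolve_right hS
      rw [map_sub, ContinuousMap.sub_apply] at h1
      have : T f₀ y - T ⟨e • (f₀ : C(X, E)), hmem f₀⟩ y = 0 := h1
      intro hc
      rw [hc, sub_zero] at this
      exact hf₀ this
end

section
/- Let x ∈ X be a support point of y ∈ Y₁ and f ∈ A(X,E). If Tf(y) ≠ 0 or Sf(y) ≠ 0, then x ∈ supp(f). -/
open Set Filter Topology

variable {X Y E : Type*} [TopologicalSpace X] [CompactSpace X] [T2Space X]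
  [TopologicalSpace Y] [CompactSpace Y] [T2Space Y]
  [NormedAddCommGroup E] [NormedSpace ℂ E] [CompleteSpace E]
  (A : Submodule ℂ C(X, E))

/-- **Corollary 3.4.** If `x` is a support point of `y ∈ Y₁` and `f ∈ A(X,E)` satisfies
`Tf(y) ≠ 0` or `Sf(y) ≠ 0`, then `x ∈ supp(f)`. -/
theorem mem_support_of_isSupportPoint
    (B : Subalgebra ℂ C(X, ℂ)) (nB : C(X, ℂ) → ℝ)
    (hB : IsRegularBanachFunctionAlgebra B nB)
    (hmod : ∀ g ∈ B, ∀ f : ↥A, g • (f : C(X, E)) ∈ A)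
    (T S : ↥A →ₗ[ℂ] C(Y, ℂ)) (hTS : JointlySeparating A T S)
    (y : Y) (hy : y ∈ Y1 A T S) (x : X) (hx : IsSupportPoint A T S y x)
    (f : ↥A) (hf : T f y ≠ 0 ∨ S f y ≠ 0) :
    x ∈ closure (coz A f) := by
  by_contra hxn
  set V := (closure (coz A f))ᶜ with hVdef
  have hVopen : IsOpen V := isClosed_closure.isOpen_compl
  have hxV : x ∈ V := hxn
  obtain ⟨t, htn, htc, hts⟩ := exists_mem_nhds_isClosed_subset (hVopen.mem_nhds hxV)
  have hWn : interior t ∈ 𝓝 x := interior_mem_nhds.2 htn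
  obtain ⟨g, hgcoz, hgTS⟩ := hx (interior t) hWn
  have hdisj : coz A f ∩ coz A g = ∅ := by
    apply eq_empty_of_forall_notMem
    rintro z ⟨hzf, hzg⟩
    exact (hts (interior_subset (hgcoz hzg))) (subset_closure hzf)
  have hdisj' : coz A g ∩ coz A f = ∅ := by rw [inter_comm]; exact hdisj
  have hclW : closure (interior t) ⊆ V := by
    calc closure (interior t) ⊆ closure t := closure_mono interior_subset
      _ = t := htc.closure_eq
      _ ⊆ V := hts
  obtain ⟨k, hkB, hksupp, hksum⟩ := hB.regular Set.univ isCompact_univ 2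
    ![V, (closure (interior t))ᶜ]
    (by
      intro i
      fin_cases i
      · exact hVopen
      · exact isClosed_closure.isOpen_compl)
    (by
      intro z _
      by_cases hz : z ∈ closure (interior t)
      · exact mem_iUnion.2 ⟨0, hclW hz⟩
      · exact mem_iUnion.2 ⟨1, hz⟩)
  -- split any h ∈ A as h₁ + h₂ with coz h₁ ⊆ V, coz h₂ ⊆ (closure (interior t))ᶜ
  have hsplit : ∀ h : ↥A, ∃ h₁ h₂ : ↥A, h₁ + h₂ = h ∧
      coz A h₁ ⊆ V ∧ coz A h₂ ⊆ (closure (interior t))ᶜ := by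
    intro h
    refine ⟨⟨k 0 • (h : C(X, E)), hmod _ (hkB 0) h⟩,
      ⟨k 1 • (h : C(X, E)), hmod _ (hkB 1) h⟩, ?_, ?_, ?_⟩
    · apply Subtype.ext
      show k 0 • (h : C(X, E)) + k 1 • (h : C(X, E)) = (h : C(X, E))
      ext z
      have h1 : (∑ i, k i z) = 1 := hksum z (mem_univ z)
      rw [Fin.sum_univ_two] at h1
      show k 0 z • (h : C(X, E)) z + k 1 z • (h : C(X, E)) z = (h : C(X, E)) z
      rw [← add_smul, h1, one_smul]
    · intro z hz
      have hk0 : k 0 z ≠ 0 := by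
        intro h0
        apply hz
        show k 0 z • (h : C(X, E)) z = 0
        rw [h0, zero_smul]
      have : z ∈ closure {x | k 0 x ≠ 0} := subset_closure hk0
      simpa using hksupp 0 this
    · intro z hz
      have hk1 : k 1 z ≠ 0 := by
        intro h0
        apply hz
        show k 1 z • (h : C(X, E)) z = 0
        rw [h0, zero_smul]
      have : z ∈ closure {x | k 1 x ≠ 0} := subset_closure hk1
      simpa using hksupp 1 this
  have hVf : ∀ h : ↥A, coz A h ⊆ V → coz A h ∩ coz A f = ∅ := by
    intro h hh
    apply eq_empty_of_forall_notMem
    rintro z ⟨hz1, hz2⟩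
    exact (hh hz1) (subset_closure hz2)
  have hWg : ∀ h : ↥A, coz A h ⊆ (closure (interior t))ᶜ →
      coz A h ∩ coz A g = ∅ := by
    intro h hh
    apply eq_empty_of_forall_notMem
    rintro z ⟨hz1, hz2⟩
    exact (hh hz1) (subset_closure (hgcoz hz2))
  rcases hf with hTf | hSf
  · -- T f y ≠ 0 ⇒ S g y = 0 ⇒ T g y ≠ 0
    have hSg : S g y = 0 := by
      have := hTS f g hdisj y
      exact (mul_eq_zero.1 this).resolve_left hTf
    have hTg : T g y ≠ 0 := by
      rcases hgTS with h' | h'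
      · exact h'
      · exact absurd hSg h'
    obtain ⟨h, hh⟩ := hy.2
    obtain ⟨h₁, h₂, heq, hc1, hc2⟩ := hsplit h
    have e1 : S h₁ y = 0 := by
      have := hTS f h₁ (by rw [inter_comm]; exact hVf h₁ hc1) y
      exact (mul_eq_zero.1 this).resolve_left hTf
    have e2 : S h₂ y = 0 := by
      have := hTS g h₂ (by rw [inter_comm]; exact hWg h₂ hc2) y
      exact (mul_eq_zero.1 this).resolve_left hTg
    apply hh
    rw [← heq, map_add]
    show S h₁ y + S h₂ y = 0
    rw [e1, e2, add_zero]
  · -- S f y ≠ 0 ⇒ T g y = 0 ⇒ S g y ≠ 0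
    have hTg : T g y = 0 := by
      have := hTS g f hdisj' y
      exact (mul_eq_zero.1 this).resolve_right hSf
    have hSg : S g y ≠ 0 := by
      rcases hgTS with h' | h'
      · exact absurd hTg h'
      · exact h'
    obtain ⟨h, hh⟩ := hy.1
    obtain ⟨h₁, h₂, heq, hc1, hc2⟩ := hsplit h
    have e1 : T h₁ y = 0 := by
      have := hTS h₁ f (hVf h₁ hc1) y
      exact (mul_eq_zero.1 this).resolve_right hSf
    have e2 : T h₂ y = 0 := by
      have := hTS h₂ g (hWg h₂ hc2) y
      exact (mul_eq_zero.1 this).resolve_right hSg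
    apply hh
    rw [← heq, map_add]
    show T h₁ y + T h₂ y = 0
    rw [e1, e2, add_zero]
end

section
/- Every y ∈ Y₁ has exactly one support point; that is, the set of support points of each y ∈ Y₁ is a singleton. -/
open Set Filter Topology

variable {X Y E : Type*} [TopologicalSpace X] [CompactSpace X] [T2Space X]
  [TopologicalSpace Y] [CompactSpace Y] [T2Space Y]
  [NormedAddCommGroup E] [NormedSpace ℂ E] [CompleteSpace E]
  (A : Submodule ℂ C(X, E))

/-- If `R f y ≠ 0` for some `f`, then there is a point `x` such that every
neighborhood of `x` contains the cozero set of some `f` with `R f y ≠ 0`. -/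
lemma exists_supportPoint_aux
    (B : Subalgebra ℂ C(X, ℂ)) (nB : C(X, ℂ) → ℝ)
    (hB : IsRegularBanachFunctionAlgebra B nB)
    (hmod : ∀ g ∈ B, ∀ f : ↥A, g • (f : C(X, E)) ∈ A)
    (R : ↥A →ₗ[ℂ] C(Y, ℂ)) (y : Y) (hy : ∃ f : ↥A, R f y ≠ 0) :
    ∃ x : X, ∀ V ∈ 𝓝 x, ∃ f : ↥A, coz A f ⊆ V ∧ R f y ≠ 0 := by
  obtain ⟨f0, hf0⟩ := hy
  by_contra hcon
  push_neg at hcon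
  choose V hVmem hVzero using hcon
  obtain ⟨t, ht⟩ := isCompact_univ.elim_nhds_subcover (fun x => interior (V x))
    (fun x _ => interior_mem_nhds.mpr (hVmem x))
  set n := t.card with hn
  set e : Fin n → X := fun i => (t.equivFin.symm i : X) with he
  have hcover : (univ : Set X) ⊆ ⋃ i : Fin n, interior (V (e i)) := by
    intro x _
    obtain ⟨z, hz, hxz⟩ : ∃ z ∈ t, x ∈ interior (V z) := by
      simpa using ht.2 (mem_univ x)
    refine mem_iUnion.mpr ⟨t.equivFin ⟨z, hz⟩, ?_⟩
    simpa [he] using hxz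
  obtain ⟨g, hgB, hgsupp, hgsum⟩ := hB.regular univ isCompact_univ n
    (fun i => interior (V (e i))) (fun _ => isOpen_interior) hcover
  refine hf0 ?_
  set F : Fin n → ↥A := fun i => ⟨g i • (f0 : C(X, E)), hmod (g i) (hgB i) f0⟩ with hF
  have hsum : (∑ i, F i) = f0 := by
    apply Subtype.ext
    rw [AddSubmonoidClass.coe_finset_sum]
    ext x
    have h1 : (∑ i, ((F i : ↥A) : C(X, E))) x = ∑ i, ((g i) x) • (f0 : C(X, E)) x := by
      rw [ContinuousMap.sum_apply]
      simp [hF]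
    rw [h1, ← Finset.sum_smul, hgsum x (mem_univ x), one_smul]
  have hzero : ∀ i : Fin n, R (F i) y = 0 := by
    intro i
    refine hVzero (e i) (F i) ?_
    intro x hx
    have hx' : (g i) x ≠ 0 := by
      intro h0
      apply hx
      show ((g i • (f0 : C(X, E))) x) = 0
      simp [h0]
    exact interior_subset (hgsupp i (subset_closure hx'))
  calc R f0 y = R (∑ i, F i) y := by rw [hsum]
    _ = (∑ i, R (F i)) y := by rw [map_sum]
    _ = ∑ i, R (F i) y := by rw [ContinuousMap.sum_apply]
    _ = 0 := by simp [hzero]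

/-- **Corollary 3.5.** Every `y ∈ Y₁` has exactly one support point. -/
theorem existsUnique_supportPoint
    (B : Subalgebra ℂ C(X, ℂ)) (nB : C(X, ℂ) → ℝ)
    (hB : IsRegularBanachFunctionAlgebra B nB)
    (hmod : ∀ g ∈ B, ∀ f : ↥A, g • (f : C(X, E)) ∈ A)
    (T S : ↥A →ₗ[ℂ] C(Y, ℂ)) (hTS : JointlySeparating A T S) :
    ∀ y ∈ Y1 A T S, ∃! x : X, IsSupportPoint A T S y x := by
  intro y hy
  obtain ⟨hyT, hyS⟩ := hy
  obtain ⟨x₀, hx₀⟩ := exists_supportPoint_aux A B nB hB hmod T y hyT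
  obtain ⟨x₁, hx₁⟩ := exists_supportPoint_aux A B nB hB hmod S y hyS
  have hx01 : x₁ = x₀ := by
    by_contra hne
    obtain ⟨U, W, hU, hW, hxU, hxW, hUW⟩ := t2_separation hne
    obtain ⟨f, hf, hSf⟩ := hx₁ U (hU.mem_nhds hxU)
    obtain ⟨g, hg, hTg⟩ := hx₀ W (hW.mem_nhds hxW)
    have hdisj : coz A g ∩ coz A f = ∅ :=
      Set.disjoint_iff_inter_eq_empty.mp (hUW.symm.mono hg hf)
    rcases mul_eq_zero.mp (hTS g f hdisj y) with h | h
    · exact hTg h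
    · exact hSf h
  subst hx01
  refine ⟨x₁, ?_, ?_⟩
  · intro V hV
    obtain ⟨f, hf, hTf⟩ := hx₀ V hV
    exact ⟨f, hf, Or.inl hTf⟩
  · intro x hx
    by_contra hne
    obtain ⟨U, W, hU, hW, hxU, hxW, hUW⟩ := t2_separation hne
    obtain ⟨f, hf, hf0⟩ := hx U (hU.mem_nhds hxU)
    rcases hf0 with hT | hS
    · obtain ⟨g, hg, hSg⟩ := hx₁ W (hW.mem_nhds hxW)
      have hdisj : coz A f ∩ coz A g = ∅ :=
        Set.disjoint_iff_inter_eq_empty.mp (hUW.mono hf hg)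
      rcases mul_eq_zero.mp (hTS f g hdisj y) with h | h
      · exact hT h
      · exact hSg h
    · obtain ⟨g, hg, hTg⟩ := hx₀ W (hW.mem_nhds hxW)
      have hdisj : coz A g ∩ coz A f = ∅ :=
        Set.disjoint_iff_inter_eq_empty.mp (hUW.symm.mono hg hf)
      rcases mul_eq_zero.mp (hTS g f hdisj y) with h | h
      · exact hTg h
      · exact hS h
end

section
/- Let f ∈ A(X,E) and let U ⊆ X be open. If f vanishes identically on U, then Tf and Sf vanish identically on φ⁻¹(U), where φ : Y₁ → X is the support map. -/
open Set Filter Topology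

variable {X Y E : Type*} [TopologicalSpace X] [CompactSpace X] [T2Space X]
  [TopologicalSpace Y] [CompactSpace Y] [T2Space Y]
  [NormedAddCommGroup E] [NormedSpace ℂ E] [CompleteSpace E]
  (A : Submodule ℂ C(X, E))

/-- **Corollary 3.6.** If `f ∈ A(X,E)` vanishes identically on an open set `U ⊆ X`, then
`Tf` and `Sf` vanish identically on `φ⁻¹(U)`, where `φ` is the support map on `Y₁`. -/
theorem map_eq_zero_on_preimage_of_eqOn_zero
    (B : Subalgebra ℂ C(X, ℂ)) (nB : C(X, ℂ) → ℝ)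
    (hB : IsRegularBanachFunctionAlgebra B nB)
    (hmod : ∀ g ∈ B, ∀ f : ↥A, g • (f : C(X, E)) ∈ A)
    (T S : ↥A →ₗ[ℂ] C(Y, ℂ)) (hTS : JointlySeparating A T S)
    (φ : Y → X) (hφ : ∀ y ∈ Y1 A T S, IsSupportPoint A T S y (φ y))
    (f : ↥A) (U : Set X) (hU : IsOpen U) (hfU : ∀ x ∈ U, (f : C(X, E)) x = 0) :
    ∀ y ∈ Y1 A T S, φ y ∈ U → T f y = 0 ∧ S f y = 0 := by

  intro y hy hyU
  -- disjointness of coz f from anything inside U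
  have hdisj : ∀ (k : ↥A), coz A k ⊆ U → coz A f ∩ coz A k = ∅ := by
    intro k hk
    ext x
    simp only [Set.mem_inter_iff, Set.mem_empty_iff_false, iff_false, not_and]
    intro hxf hxk
    exact hxf (hfU x (hk hxk))
  -- partition of unity subordinate to U, {φ y}ᶜ
  obtain ⟨g, hgB, hgsupp, hgsum⟩ := hB.regular Set.univ isCompact_univ 2
    (fun i => if i = 0 then U else {φ y}ᶜ)
    (by
      intro i
      by_cases hi : i = 0 <;> simp [hi, hU, isClosed_singleton])
    (by
      intro x _
      by_cases hx : x = φ y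
      · exact Set.mem_iUnion.2 ⟨0, by simp [hx, hyU]⟩
      · exact Set.mem_iUnion.2 ⟨1, by simp [hx]⟩)
  have hg0U : closure {x | g 0 x ≠ 0} ⊆ U := by simpa using hgsupp 0
  have hg1 : closure {x | g 1 x ≠ 0} ⊆ {φ y}ᶜ := by simpa using hgsupp 1
  set W : Set X := (closure {x | g 1 x ≠ 0})ᶜ with hW
  have hWopen : IsOpen W := isClosed_closure.isOpen_compl
  have hpW : φ y ∈ W := fun h => hg1 h rfl
  have hgsum' : ∀ x : X, g 0 x + g 1 x = 1 := by
    intro x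
    have := hgsum x (Set.mem_univ x)
    simpa [Fin.sum_univ_two] using this
  -- decomposition helper applied to arbitrary h
  have decomp : ∀ h : ↥A, ∃ h0 h1 : ↥A,
      h0 + h1 = h ∧ coz A h0 ⊆ U ∧ coz A h1 ∩ W = ∅ := by
    intro h
    refine ⟨⟨g 0 • (h : C(X, E)), hmod (g 0) (hgB 0) h⟩,
            ⟨g 1 • (h : C(X, E)), hmod (g 1) (hgB 1) h⟩, ?_, ?_, ?_⟩
    · apply Subtype.ext
      ext x
      show g 0 x • (h : C(X, E)) x + g 1 x • (h : C(X, E)) x = (h : C(X, E)) x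
      rw [← add_smul, hgsum' x, one_smul]
    · intro x hx
      have hx' : g 0 x ≠ 0 := by
        intro h0
        exact hx (by show g 0 x • (h : C(X, E)) x = 0; simp [h0])
      exact hg0U (subset_closure hx')
    · ext x
      simp only [Set.mem_inter_iff, Set.mem_empty_iff_false, iff_false, not_and]
      intro hx hxW
      have hx' : g 1 x ≠ 0 := by
        intro h1
        exact hx (by show g 1 x • (h : C(X, E)) x = 0; simp [h1])
      exact hxW (subset_closure hx')
  have hWU : W ∩ U ∈ 𝓝 (φ y) := (hWopen.inter hU).mem_nhds ⟨hpW, hyU⟩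
  constructor
  · -- T f y = 0
    by_contra hTf
    obtain ⟨h, hSh⟩ := hy.2
    obtain ⟨h0, h1, hsum, hh0, hh1⟩ := decomp h
    have hSh0 : S h0 y = 0 := by
      have := hTS f h0 (hdisj h0 hh0) y
      exact (mul_eq_zero.1 this).resolve_left hTf
    have hSh1 : S h1 y ≠ 0 := by
      have : S h y = S h0 y + S h1 y := by
        rw [← hsum, map_add]; rfl
      intro h1z
      exact hSh (by rw [this, hSh0, h1z, add_zero])
    obtain ⟨k, hk, hkTS⟩ := hφ y hy (W ∩ U) hWU
    have hkh1 : coz A k ∩ coz A h1 = ∅ := by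
      ext x
      simp only [Set.mem_inter_iff, Set.mem_empty_iff_false, iff_false, not_and]
      intro hxk hxh1
      have : x ∈ coz A h1 ∩ W := ⟨hxh1, (hk hxk).1⟩
      rw [hh1] at this
      exact this
    have hTk : T k y = 0 := by
      have := hTS k h1 hkh1 y
      exact (mul_eq_zero.1 this).resolve_right hSh1
    have hSk : S k y ≠ 0 := hkTS.resolve_left (by simpa using hTk)
    have := hTS f k (hdisj k (fun x hx => (hk hx).2)) y
    exact hSk ((mul_eq_zero.1 this).resolve_left hTf)
  · -- S f y = 0
    by_contra hSf
    obtain ⟨h, hTh⟩ := hy.1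
    obtain ⟨h0, h1, hsum, hh0, hh1⟩ := decomp h
    have hTh0 : T h0 y = 0 := by
      have : coz A h0 ∩ coz A f = ∅ := by
        rw [Set.inter_comm]; exact hdisj h0 hh0
      have := hTS h0 f this y
      exact (mul_eq_zero.1 this).resolve_right hSf
    have hTh1 : T h1 y ≠ 0 := by
      have : T h y = T h0 y + T h1 y := by
        rw [← hsum, map_add]; rfl
      intro h1z
      exact hTh (by rw [this, hTh0, h1z, add_zero])
    obtain ⟨k, hk, hkTS⟩ := hφ y hy (W ∩ U) hWU
    have hh1k : coz A h1 ∩ coz A k = ∅ := by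
      ext x
      simp only [Set.mem_inter_iff, Set.mem_empty_iff_false, iff_false, not_and]
      intro hxh1 hxk
      have : x ∈ coz A h1 ∩ W := ⟨hxh1, (hk hxk).1⟩
      rw [hh1] at this
      exact this
    have hSk : S k y = 0 := by
      have := hTS h1 k hh1k y
      exact (mul_eq_zero.1 this).resolve_left hTh1
    have hTk : T k y ≠ 0 := hkTS.resolve_right (by simpa using hSk)
    have : coz A k ∩ coz A f = ∅ := by
      rw [Set.inter_comm]; exact hdisj k (fun x hx => (hk hx).2)
    have := hTS k f this y
    exact hTk ((mul_eq_zero.1 this).resolve_right hSf)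
end

section
/- The support map φ : Y₁ → X, assigning to each y ∈ Y₁ its unique support point, is continuous. -/
open Set Filter Topology

variable {X Y E : Type*} [TopologicalSpace X] [CompactSpace X] [T2Space X]
  [TopologicalSpace Y] [CompactSpace Y] [T2Space Y]
  [NormedAddCommGroup E] [NormedSpace ℂ E] [CompleteSpace E]
  (A : Submodule ℂ C(X, E))

/-- Key lemma: at a support point of `y ∈ Y₁`, one can find, in any neighborhood,
functions witnessing nonvanishing of `T` and of `S` separately. -/
lemma exists_coz_subset_of_isSupportPoint
    (B : Subalgebra ℂ C(X, ℂ)) (nB : C(X, ℂ) → ℝ)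
    (hB : IsRegularBanachFunctionAlgebra B nB)
    (hmod : ∀ g ∈ B, ∀ f : ↥A, g • (f : C(X, E)) ∈ A)
    (T S : ↥A →ₗ[ℂ] C(Y, ℂ)) (hTS : JointlySeparating A T S)
    (y : Y) (hy : y ∈ Y1 A T S) (x : X) (hx : IsSupportPoint A T S y x)
    (V : Set X) (hV : V ∈ 𝓝 x) :
    (∃ f : ↥A, coz A f ⊆ V ∧ T f y ≠ 0) ∧ (∃ f : ↥A, coz A f ⊆ V ∧ S f y ≠ 0) := by
  -- choose an open O with x ∈ O ⊆ V and a closed nbhd K ⊆ O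
  obtain ⟨O, hOV, hOopen, hxO⟩ := mem_nhds_iff.mp hV
  obtain ⟨K, hKnhds, hKclosed, hKO⟩ :=
    exists_mem_nhds_isClosed_subset (hOopen.mem_nhds hxO)
  -- support point property on interior K
  obtain ⟨f₀, hf₀coz, hf₀⟩ := hx (interior K) (isOpen_interior.mem_nhds (mem_interior_iff_mem_nhds.mpr hKnhds))
  -- partition of unity subordinate to {O, Kᶜ}
  set U : Fin 2 → Set X := fun i => if i = 0 then O else Kᶜ with hU
  obtain ⟨g, hgB, hgsupp, hgsum⟩ := hB.regular univ isCompact_univ 2 U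
    (by
      intro i
      by_cases hi : i = 0 <;> simp [hU, hi, hOopen, hKclosed.isOpen_compl])
    (by
      intro z _
      by_cases hz : z ∈ K
      · exact mem_iUnion.mpr ⟨0, by simpa [hU] using hKO hz⟩
      · exact mem_iUnion.mpr ⟨1, by simpa [hU] using hz⟩)
  have hg0 : closure {x | g 0 x ≠ 0} ⊆ O := by simpa [hU] using hgsupp 0
  have hg1 : closure {x | g 1 x ≠ 0} ⊆ Kᶜ := by simpa [hU] using hgsupp 1
  -- decomposition of an arbitrary h ∈ A
  have decomp : ∀ h : ↥A, ∃ h₁ h₂ : ↥A, h = h₁ + h₂ ∧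
      coz A h₁ ⊆ O ∧ coz A h₂ ⊆ Kᶜ := by
    intro h
    refine ⟨⟨g 0 • (h : C(X, E)), hmod (g 0) (hgB 0) h⟩,
      ⟨g 1 • (h : C(X, E)), hmod (g 1) (hgB 1) h⟩, ?_, ?_, ?_⟩
    · apply Subtype.ext
      ext z
      have hsum := hgsum z (mem_univ z)
      rw [Fin.sum_univ_two] at hsum
      show (h : C(X, E)) z = (g 0 • (h : C(X, E))) z + (g 1 • (h : C(X, E))) z
      simp only [ContinuousMap.smul_apply']
      rw [← add_smul, hsum, one_smul]
    · intro z hz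
      have : g 0 z ≠ 0 := by
        intro h0
        apply hz
        show (g 0 • (h : C(X, E))) z = 0
        simp [h0]
      exact hg0 (subset_closure this)
    · intro z hz
      have : g 1 z ≠ 0 := by
        intro h0
        apply hz
        show (g 1 • (h : C(X, E))) z = 0
        simp [h0]
      exact hg1 (subset_closure this)
  have hsubV : interior K ⊆ V := fun z hz => hOV (hKO (interior_subset hz))
  -- disjointness helper
  have hdisj : ∀ p q : ↥A, coz A p ⊆ K → coz A q ⊆ Kᶜ → coz A p ∩ coz A q = ∅ := by
    intro p q hp hq
    ext z
    simp only [mem_inter_iff, mem_empty_iff_false, iff_false, not_and]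
    intro hzp hzq
    exact hq hzq (hp hzp)
  have hf₀K : coz A f₀ ⊆ K := fun z hz => interior_subset (hf₀coz hz)
  constructor
  · rcases hf₀ with hT | hS
    · exact ⟨f₀, fun z hz => hsubV (hf₀coz hz), hT⟩
    · obtain ⟨h, hh⟩ := hy.1
      obtain ⟨h₁, h₂, heq, hco1, hco2⟩ := decomp h
      have hz2 : T h₂ y * S f₀ y = 0 := hTS h₂ f₀ (by
        rw [inter_comm]; exact hdisj f₀ h₂ hf₀K hco2) y
      have hTh2 : T h₂ y = 0 := by
        rcases mul_eq_zero.mp hz2 with h0 | h0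
        · exact h0
        · exact absurd h0 hS
      have : T h y = T h₁ y := by
        rw [heq, map_add]
        simp [hTh2]
      exact ⟨h₁, fun z hz => hOV (hco1 hz), by rw [← this]; exact hh⟩
  · rcases hf₀ with hT | hS
    · obtain ⟨h, hh⟩ := hy.2
      obtain ⟨h₁, h₂, heq, hco1, hco2⟩ := decomp h
      have hz2 : T f₀ y * S h₂ y = 0 := hTS f₀ h₂ (hdisj f₀ h₂ hf₀K hco2) y
      have hSh2 : S h₂ y = 0 := by
        rcases mul_eq_zero.mp hz2 with h0 | h0
        · exact absurd h0 hT
        · exact h0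
      have : S h y = S h₁ y := by
        rw [heq, map_add]
        simp [hSh2]
      exact ⟨h₁, fun z hz => hOV (hco1 hz), by rw [← this]; exact hh⟩
    · exact ⟨f₀, fun z hz => hsubV (hf₀coz hz), hS⟩

/-- **Lemma 3.7.** The support map `φ : Y₁ → X` is continuous. -/
theorem continuousOn_supportMap
    (B : Subalgebra ℂ C(X, ℂ)) (nB : C(X, ℂ) → ℝ)
    (hB : IsRegularBanachFunctionAlgebra B nB)
    (hmod : ∀ g ∈ B, ∀ f : ↥A, g • (f : C(X, E)) ∈ A)
    (T S : ↥A →ₗ[ℂ] C(Y, ℂ)) (hTS : JointlySeparating A T S)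
    (φ : Y → X) (hφ : ∀ y ∈ Y1 A T S, IsSupportPoint A T S y (φ y)) :
    ContinuousOn φ (Y1 A T S) := by
  intro y₀ hy₀
  intro V hV
  -- get a closed nbhd K of φ y₀ inside V
  obtain ⟨K, hKnhds, hKclosed, hKV⟩ := exists_mem_nhds_isClosed_subset hV
  obtain ⟨⟨f, hfcoz, hfT⟩, ⟨g, hgcoz, hgS⟩⟩ :=
    exists_coz_subset_of_isSupportPoint A B nB hB hmod T S hTS y₀ hy₀ (φ y₀)
      (hφ y₀ hy₀) (interior K) (isOpen_interior.mem_nhds (mem_interior_iff_mem_nhds.mpr hKnhds))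
  refine mem_nhdsWithin.mpr ⟨{y | T f y ≠ 0} ∩ {y | S g y ≠ 0}, ?_, ⟨hfT, hgS⟩, ?_⟩
  · exact ((isOpen_compl_singleton.preimage (T f).continuous).inter
      (isOpen_compl_singleton.preimage (S g).continuous))
  · rintro y ⟨⟨hyT, hyS⟩, hyY1⟩
    show φ y ∈ V
    by_contra hnot
    have hKc : Kᶜ ∈ 𝓝 (φ y) :=
      hKclosed.isOpen_compl.mem_nhds (fun hmem => hnot (hKV hmem))
    obtain ⟨h, hhcoz, hh⟩ := hφ y hyY1 Kᶜ hKc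
    have hfK : coz A f ⊆ K := fun z hz => interior_subset (hfcoz hz)
    have hgK : coz A g ⊆ K := fun z hz => interior_subset (hgcoz hz)
    rcases hh with hT | hS
    · have : T h y * S g y = 0 := hTS h g (by
        ext z
        simp only [mem_inter_iff, mem_empty_iff_false, iff_false, not_and]
        intro hz1 hz2
        exact hhcoz hz1 (hgK hz2)) y
      rcases mul_eq_zero.mp this with h0 | h0
      · exact hT h0
      · exact hyS h0
    · have : T f y * S h y = 0 := hTS f h (by
        ext z
        simp only [mem_inter_iff, mem_empty_iff_false, iff_false, not_and]
        intro hz1 hz2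
        exact hhcoz hz2 (hfK hz1)) y
      rcases mul_eq_zero.mp this with h0 | h0
      · exact hyT h0
      · exact hS h0
end

section
/- Suppose (A(X,E), ‖·‖_∞) has property (P). Let y ∈ Y₁ be such that the functional f ↦ Tf(y) (respectively f ↦ Sf(y)) is ‖·‖_∞-continuous on A(X,E). Then for every f ∈ A(X,E) with f(φ(y)) = 0 one has Tf(y) = 0 (respectively Sf(y) = 0), where φ is the support map. -/
open Set Filter Topology

variable {X Y E : Type*} [TopologicalSpace X] [CompactSpace X] [T2Space X]
  [TopologicalSpace Y] [CompactSpace Y] [T2Space Y]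
  [NormedAddCommGroup E] [NormedSpace ℂ E] [CompleteSpace E]
  (A : Submodule ℂ C(X, E))

/-- `(A(X,E), nn)` has property (P): for every `f ∈ A(X,E)` and `x ∈ X` with `f(x) = 0`
there is a sequence `(fₙ)` in `A(X,E)`, each term vanishing on a neighborhood of `x`,
with `nn (fₙ - f) → 0`. -/
def HasPropertyP (A : Submodule ℂ C(X, E)) (nn : C(X, E) → ℝ) : Prop :=
  ∀ f : ↥A, ∀ x : X, (f : C(X, E)) x = 0 →
    ∃ u : ℕ → C(X, E), (∀ n, u n ∈ A) ∧ (∀ n, ∀ᶠ z in 𝓝 x, u n z = 0) ∧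
      Filter.Tendsto (fun n => nn (u n - (f : C(X, E)))) Filter.atTop (𝓝 0)

/-- Key lemma: for `y ∈ Y₁` and any neighborhood `V` of `φ y`, there are functions in
`A` with cozero set inside `V` on which `T · y` (resp. `S · y`) does not vanish. -/
lemma exists_coz_subset_ne_zero {X Y E : Type*} [TopologicalSpace X] [CompactSpace X]
    [T2Space X] [TopologicalSpace Y] [CompactSpace Y] [T2Space Y]
    [NormedAddCommGroup E] [NormedSpace ℂ E]
    (A : Submodule ℂ C(X, E))
    (B : Subalgebra ℂ C(X, ℂ)) (nB : C(X, ℂ) → ℝ)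
    (hB : IsRegularBanachFunctionAlgebra B nB)
    (hmod : ∀ g ∈ B, ∀ f : ↥A, g • (f : C(X, E)) ∈ A)
    (T S : ↥A →ₗ[ℂ] C(Y, ℂ)) (hTS : JointlySeparating A T S)
    (φ : Y → X) (hφ : ∀ y ∈ Y1 A T S, IsSupportPoint A T S y (φ y))
    (y : Y) (hy : y ∈ Y1 A T S) (V : Set X) (hV : V ∈ 𝓝 (φ y)) :
    (∃ f : ↥A, coz A f ⊆ V ∧ T f y ≠ 0) ∧ (∃ f : ↥A, coz A f ⊆ V ∧ S f y ≠ 0) := by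
  obtain ⟨⟨h, hTh⟩, ⟨k, hSk⟩⟩ := hy
  obtain ⟨K, hKnhds, hKclosed, hKV⟩ :=
    exists_mem_nhds_isClosed_subset (interior_mem_nhds.2 hV)
  set W := interior K with hWdef
  have hWnhds : W ∈ 𝓝 (φ y) := interior_mem_nhds.2 hKnhds
  have hclW : closure W ⊆ K := closure_minimal interior_subset hKclosed
  set U : Fin 2 → Set X := ![interior V, (closure W)ᶜ] with hUdef
  have hUopen : ∀ i, IsOpen (U i) := by
    intro i
    fin_cases i
    · exact isOpen_interior
    · exact isClosed_closure.isOpen_compl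
  have hUcover : (Set.univ : Set X) ⊆ ⋃ i, U i := by
    intro x _
    by_cases hx : x ∈ closure W
    · exact Set.mem_iUnion.2 ⟨0, hKV (hclW hx)⟩
    · exact Set.mem_iUnion.2 ⟨1, hx⟩
  obtain ⟨g, hgB, hgsupp, hgsum⟩ :=
    hB.regular Set.univ isCompact_univ 2 U hUopen hUcover
  have hsum : ∀ x : X, g 0 x + g 1 x = 1 := by
    intro x
    have := hgsum x (Set.mem_univ x)
    simpa [Fin.sum_univ_two] using this
  obtain ⟨f₀, hf₀coz, hf₀⟩ := hφ y ⟨⟨h, hTh⟩, ⟨k, hSk⟩⟩ W hWnhds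
  have hWV : W ⊆ V := fun z hz => interior_subset (hKV (interior_subset hz))
  -- split an arbitrary element of A along the partition of unity
  have split : ∀ p : ↥A,
      ∃ p1 p2 : ↥A, p = p1 + p2 ∧ coz A p1 ⊆ V ∧ coz A p2 ∩ coz A f₀ = ∅ := by
    intro p
    refine ⟨⟨g 0 • (p : C(X, E)), hmod _ (hgB 0) p⟩,
      ⟨g 1 • (p : C(X, E)), hmod _ (hgB 1) p⟩, ?_, ?_, ?_⟩
    · apply Subtype.ext
      ext z
      have hz := hsum z
      simp only [Submodule.coe_add, ContinuousMap.add_apply, ContinuousMap.smul_apply']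
      rw [← add_smul, hz, one_smul]
    · intro z hz
      have hgz : g 0 z ≠ 0 := by
        intro h0
        apply hz
        show (g 0 • (p : C(X, E))) z = 0
        simp [ContinuousMap.smul_apply', h0]
      have : z ∈ closure {x | g 0 x ≠ 0} := subset_closure hgz
      have := hgsupp 0 this
      simp only [hUdef, Matrix.cons_val_zero] at this
      exact interior_subset this
    · rw [Set.eq_empty_iff_forall_notMem]
      rintro z ⟨hz1, hz2⟩
      have hgz : g 1 z ≠ 0 := by
        intro h0
        apply hz1
        show (g 1 • (p : C(X, E))) z = 0
        simp [ContinuousMap.smul_apply', h0]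
      have : z ∈ closure {x | g 1 x ≠ 0} := subset_closure hgz
      have := hgsupp 1 this
      simp only [hUdef, Matrix.cons_val_one, Matrix.head_cons] at this
      exact this (subset_closure (hf₀coz hz2))
  constructor
  · rcases hf₀ with hT0 | hS0
    · exact ⟨f₀, hf₀coz.trans hWV, hT0⟩
    · obtain ⟨h1, h2, hsplit, hcoz1, hdisj⟩ := split h
      have hz2 : T h2 y = 0 := by
        rcases mul_eq_zero.1 (hTS h2 f₀ hdisj y) with h' | h'
        · exact h'
        · exact absurd h' hS0
      refine ⟨h1, hcoz1, fun h0 => hTh ?_⟩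
      rw [hsplit, map_add]
      simp [hz2, h0]
  · rcases hf₀ with hT0 | hS0
    · obtain ⟨k1, k2, hsplit, hcoz1, hdisj⟩ := split k
      have hdisj' : coz A f₀ ∩ coz A k2 = ∅ := by
        rw [Set.inter_comm]; exact hdisj
      have hz2 : S k2 y = 0 := by
        rcases mul_eq_zero.1 (hTS f₀ k2 hdisj' y) with h' | h'
        · exact absurd h' hT0
        · exact h'
      refine ⟨k1, hcoz1, fun h0 => hSk ?_⟩
      rw [hsplit, map_add]
      simp [hz2, h0]
    · exact ⟨f₀, hf₀coz.trans hWV, hS0⟩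

/-- **Lemma 3.9.** Suppose `(A(X,E), ‖·‖_∞)` has property (P).  If `y ∈ Y₁` is such that
`f ↦ Tf(y)` (resp. `f ↦ Sf(y)`) is sup-norm continuous on `A(X,E)`, then `Tf(y) = 0`
(resp. `Sf(y) = 0`) for every `f ∈ A(X,E)` with `f(φ(y)) = 0`, `φ` the support map. -/
theorem map_eq_zero_of_eq_zero_at_support
    (B : Subalgebra ℂ C(X, ℂ)) (nB : C(X, ℂ) → ℝ)
    (hB : IsRegularBanachFunctionAlgebra B nB)
    (hmod : ∀ g ∈ B, ∀ f : ↥A, g • (f : C(X, E)) ∈ A)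
    (hP : HasPropertyP A (fun f => ‖f‖))
    (T S : ↥A →ₗ[ℂ] C(Y, ℂ)) (hTS : JointlySeparating A T S)
    (φ : Y → X) (hφ : ∀ y ∈ Y1 A T S, IsSupportPoint A T S y (φ y))
    (y : Y) (hy : y ∈ Y1 A T S) :
    (Continuous (fun f : ↥A => T f y) →
      ∀ f : ↥A, (f : C(X, E)) (φ y) = 0 → T f y = 0) ∧
    (Continuous (fun f : ↥A => S f y) →
      ∀ f : ↥A, (f : C(X, E)) (φ y) = 0 → S f y = 0) := by
  constructor
  · intro hcont f hf
    obtain ⟨u, huA, huz, hlim⟩ := hP f (φ y) hf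
    have hzero : ∀ n, T ⟨u n, huA n⟩ y = 0 := by
      intro n
      have hVn : {z | u n z = 0} ∈ 𝓝 (φ y) := huz n
      obtain ⟨-, g, hgcoz, hSg⟩ :=
        exists_coz_subset_ne_zero A B nB hB hmod T S hTS φ hφ y hy _ hVn
      have hdisj : coz A ⟨u n, huA n⟩ ∩ coz A g = ∅ := by
        rw [Set.eq_empty_iff_forall_notMem]
        rintro z ⟨hz1, hz2⟩
        exact hz1 (hgcoz hz2)
      rcases mul_eq_zero.1 (hTS _ g hdisj y) with h' | h'
      · exact h'
      · exact absurd h' hSg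
    have htend : Tendsto (fun n => (⟨u n, huA n⟩ : ↥A)) atTop (𝓝 f) := by
      rw [tendsto_subtype_rng]
      exact tendsto_iff_norm_sub_tendsto_zero.2 hlim
    have h1 : Tendsto (fun n => T ⟨u n, huA n⟩ y) atTop (𝓝 (T f y)) :=
      (hcont.tendsto f).comp htend
    have h2 : (fun n => T ⟨u n, huA n⟩ y) = fun _ => (0 : ℂ) := funext hzero
    rw [h2] at h1
    exact (tendsto_nhds_unique h1 tendsto_const_nhds).symm ▸ rfl
  · intro hcont f hf
    obtain ⟨u, huA, huz, hlim⟩ := hP f (φ y) hf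
    have hzero : ∀ n, S ⟨u n, huA n⟩ y = 0 := by
      intro n
      have hVn : {z | u n z = 0} ∈ 𝓝 (φ y) := huz n
      obtain ⟨⟨g, hgcoz, hTg⟩, -⟩ :=
        exists_coz_subset_ne_zero A B nB hB hmod T S hTS φ hφ y hy _ hVn
      have hdisj : coz A g ∩ coz A ⟨u n, huA n⟩ = ∅ := by
        rw [Set.eq_empty_iff_forall_notMem]
        rintro z ⟨hz1, hz2⟩
        exact hz2 (hgcoz hz1)
      rcases mul_eq_zero.1 (hTS g _ hdisj y) with h' | h'
      · exact absurd h' hTg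
      · exact h'
    have htend : Tendsto (fun n => (⟨u n, huA n⟩ : ↥A)) atTop (𝓝 f) := by
      rw [tendsto_subtype_rng]
      exact tendsto_iff_norm_sub_tendsto_zero.2 hlim
    have h1 : Tendsto (fun n => S ⟨u n, huA n⟩ y) atTop (𝓝 (S f y)) :=
      (hcont.tendsto f).comp htend
    have h2 : (fun n => S ⟨u n, huA n⟩ y) = fun _ => (0 : ℂ) := funext hzero
    rw [h2] at h1
    exact (tendsto_nhds_unique h1 tendsto_const_nhds).symm ▸ rfl
end

section
/- Suppose (A(X,E), ‖·‖_∞) has property (P) and A(X,E) contains the constant functions. Then there exist maps Λ^T : Y_cT → E* and Λ^S : Y_cS → E* (namely Λ^T_y(e) = T(ẽ)(y) and Λ^S_y(e) = S(ẽ)(y), where ẽ is the constant function with value e) such that Tf(y) = Λ^T_y(f(φ(y))) for all f ∈ A(X,E) and y ∈ Y_cT, and Sf(y) = Λ^S_y(f(φ(y))) for all f ∈ A(X,E) and y ∈ Y_cS. -/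
open Set Filter Topology

variable {X Y E : Type*} [TopologicalSpace X] [CompactSpace X] [T2Space X]
  [TopologicalSpace Y] [CompactSpace Y] [T2Space Y]
  [NormedAddCommGroup E] [NormedSpace ℂ E] [CompleteSpace E]
  (A : Submodule ℂ C(X, E))

/-!
A functional `f ↦ Tf(y)` with `y ∈ Y₁` is local at the support point `x = φ(y)`: it kills every
`h` vanishing near `x`. Otherwise `Th(y) ≠ 0`; a partition of unity splits any `g` with
`Sg(y) ≠ 0` as `a + b`, with `a` supported where `h = 0` and `b` vanishing near `x`. Joint
separation with `h` gives `Sa(y) = 0`, hence `Sb(y) ≠ 0`, and a function `f` witnessing that `x`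
is a support point, supported where both `h` and `b` vanish, contradicts joint separation with
`b` or with `h`. Property (P) makes the functions vanishing near `x` dense among those vanishing
at `x`, so a continuous such functional depends only on `f(x)`, and since `A(X,E)` contains the
constants, `Tf(y) = T(f(x)~)(y)`.
-/

section Locality

omit [CompactSpace X] [T2Space X] [CompactSpace Y] [T2Space Y] [CompleteSpace E]

variable {T S : ↥A →ₗ[ℂ] C(Y, ℂ)}

lemma coz_inter_coz_eq_empty {f g : ↥A} (h : coz A f ⊆ {z | (g : C(X, E)) z = 0}) :
    coz A f ∩ coz A g = ∅ :=
  eq_empty_of_forall_notMem fun _ hz => hz.2 (h hz.1)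

lemma JointlySeparating.symm (hTS : JointlySeparating A T S) : JointlySeparating A S T :=
  fun f g hfg y => by rw [mul_comm]; exact hTS g f (by rwa [inter_comm]) y

lemma IsSupportPoint.symm {y : Y} {x : X} (hx : IsSupportPoint A T S y x) :
    IsSupportPoint A S T y x :=
  fun V hV => (hx V hV).imp fun _ hf => ⟨hf.1, hf.2.symm⟩

variable [CompactSpace X] [T2Space X] {B : Subalgebra ℂ C(X, ℂ)} {nB : C(X, ℂ) → ℝ}
  (hB : IsRegularBanachFunctionAlgebra B nB) (hmod : ∀ g ∈ B, ∀ f : ↥A, g • (f : C(X, E)) ∈ A)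
include hB hmod

lemma exists_add_eq_coz_subset_eventually_eq_zero {x : X} {V : Set X} (hV : V ∈ 𝓝 x) (g : ↥A) :
    ∃ a b : ↥A, a + b = g ∧ coz A a ⊆ V ∧ ∀ᶠ z in 𝓝 x, (b : C(X, E)) z = 0 := by
  have hcover : univ ⊆ ⋃ i, ![interior V, {x}ᶜ] i := fun z _ => by
    by_cases hz : z = x
    · exact mem_iUnion.2 ⟨0, by simpa [hz] using mem_interior_iff_mem_nhds.2 hV⟩
    · exact mem_iUnion.2 ⟨1, by simpa using hz⟩
  obtain ⟨e, heB, hesupp, hesum⟩ := hB.regular univ isCompact_univ 2 _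
    (by intro i; fin_cases i <;> simp) hcover
  refine ⟨⟨e 0 • (g : C(X, E)), hmod _ (heB 0) g⟩, ⟨e 1 • (g : C(X, E)), hmod _ (heB 1) g⟩,
    ?_, ?_, ?_⟩
  · ext z
    simpa [← add_smul, Fin.sum_univ_two] using congrArg (· • (g : C(X, E)) z) (hesum z trivial)
  · intro z hz
    exact interior_subset (hesupp 0 (subset_closure (left_ne_zero_of_smul hz)))
  · have hx : x ∈ (closure {z | e 1 z ≠ 0})ᶜ := fun hx => by simpa using hesupp 1 hx
    filter_upwards [isClosed_closure.isOpen_compl.mem_nhds hx] with z hz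
    simp [show e 1 z = 0 from not_not.1 fun h => hz (subset_closure h)]

lemma JointlySeparating.eq_zero_of_eventually_eq_zero (hTS : JointlySeparating A T S) {y : Y}
    (hSy : ∃ g : ↥A, S g y ≠ 0) {x : X} (hx : IsSupportPoint A T S y x) {h : ↥A}
    (hh : ∀ᶠ z in 𝓝 x, (h : C(X, E)) z = 0) : T h y = 0 := by
  by_contra hTh
  obtain ⟨g, hg⟩ := hSy
  obtain ⟨a, b, rfl, hca, hb⟩ := exists_add_eq_coz_subset_eventually_eq_zero A hB hmod hh g
  have hSa : S a y = 0 := (mul_eq_zero.1 (hTS h a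
    (by rw [inter_comm]; exact coz_inter_coz_eq_empty A hca) y)).resolve_left hTh
  have hSb : S b y ≠ 0 := by simpa [hSa] using hg
  obtain ⟨f, hcf, hf⟩ := hx _ (hh.and hb)
  rcases hf with hTf | hSf
  · exact hSb <| (mul_eq_zero.1
      (hTS f b (coz_inter_coz_eq_empty A fun _ hz => (hcf hz).2) y)).resolve_left hTf
  · refine hSf <| (mul_eq_zero.1 (hTS h f ?_ y)).resolve_left hTh
    rw [inter_comm]
    exact coz_inter_coz_eq_empty A fun _ hz => (hcf hz).1

lemma JointlySeparating.apply_eq_zero_of_eventually_eq_zero (hTS : JointlySeparating A T S)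
    {y : Y} (hy : y ∈ Y1 A T S) {x : X} (hx : IsSupportPoint A T S y x) {h : ↥A}
    (hh : ∀ᶠ z in 𝓝 x, (h : C(X, E)) z = 0) : T h y = 0 ∧ S h y = 0 :=
  ⟨hTS.eq_zero_of_eventually_eq_zero A hB hmod hy.2 hx hh,
    hTS.symm.eq_zero_of_eventually_eq_zero A hB hmod hy.1 hx.symm hh⟩

end Locality

section RepresentingFunctional

omit [T2Space X] [CompactSpace Y] [T2Space Y] [CompleteSpace E]

lemma HasPropertyP.mem_closure (hP : HasPropertyP A fun f => ‖f‖) {f : ↥A} {x : X}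
    (hf : (f : C(X, E)) x = 0) :
    f ∈ closure {h : ↥A | ∀ᶠ z in 𝓝 x, (h : C(X, E)) z = 0} := by
  obtain ⟨u, huA, hu0, hu⟩ := hP f x hf
  refine mem_closure_of_tendsto (f := fun n => (⟨u n, huA n⟩ : ↥A)) (b := atTop) ?_
    (Eventually.of_forall hu0)
  exact tendsto_subtype_rng.2 (tendsto_iff_norm_sub_tendsto_zero.2 hu)

omit [CompactSpace X]

def constCLM (hconst : ∀ e : E, ContinuousMap.const X e ∈ A) : E →L[ℂ] ↥A where
  toFun e := ⟨ContinuousMap.const X e, hconst e⟩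
  map_add' _ _ := rfl
  map_smul' _ _ := rfl
  cont := ContinuousMap.continuous_const'.subtype_mk _

open Classical in
/-- The paper's `Λ_y(e) = R(ẽ)(y)`, set to `0` at points `y` where `f ↦ Rf(y)` is not continuous. -/
noncomputable def representingFunctional (R : ↥A →ₗ[ℂ] C(Y, ℂ))
    (hconst : ∀ e : E, ContinuousMap.const X e ∈ A) (y : Y) : E →L[ℂ] ℂ :=
  if hR : Continuous fun f : ↥A => R f y then
    (⟨(ContinuousMap.evalCLM ℂ y).toLinearMap ∘ₗ R, hR⟩ : ↥A →L[ℂ] ℂ).comp (constCLM A hconst)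
  else 0

variable {R : ↥A →ₗ[ℂ] C(Y, ℂ)} (hconst : ∀ e : E, ContinuousMap.const X e ∈ A) {y : Y}

lemma representingFunctional_apply (hR : Continuous fun f : ↥A => R f y) (e : E) :
    representingFunctional A R hconst y e = R ⟨ContinuousMap.const X e, hconst e⟩ y := by
  simp only [representingFunctional, hR, dite_true]
  rfl

lemma apply_eq_representingFunctional_apply [CompactSpace X] (hP : HasPropertyP A fun f => ‖f‖)
    (hR : Continuous fun f : ↥A => R f y) {x : X}
    (hloc : ∀ h : ↥A, (∀ᶠ z in 𝓝 x, (h : C(X, E)) z = 0) → R h y = 0) (f : ↥A) :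
    R f y = representingFunctional A R hconst y ((f : C(X, E)) x) := by
  set c : ↥A := ⟨ContinuousMap.const X ((f : C(X, E)) x), hconst _⟩
  have hvanish : R (f - c) y = 0 :=
    EqOn.closure (f := fun h : ↥A => R h y) hloc hR continuous_const
      (hP.mem_closure A (by simp [c]))
  rw [representingFunctional_apply A hconst hR, ← sub_eq_zero]
  simpa using hvanish

end RepresentingFunctional

/-- **Lemma 3.10.** Suppose `(A(X,E), ‖·‖_∞)` has property (P) and `A(X,E)` contains the
constants.  Then there are maps `Λᵀ : Y_cT → E*` and `Λˢ : Y_cS → E*`, given by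
`Λᵀ_y(e) = T(ẽ)(y)` and `Λˢ_y(e) = S(ẽ)(y)`, such that `Tf(y) = Λᵀ_y(f(φ(y)))` on `Y_cT`
and `Sf(y) = Λˢ_y(f(φ(y)))` on `Y_cS`. -/
theorem exists_representing_functionals
    (B : Subalgebra ℂ C(X, ℂ)) (nB : C(X, ℂ) → ℝ)
    (hB : IsRegularBanachFunctionAlgebra B nB)
    (hmod : ∀ g ∈ B, ∀ f : ↥A, g • (f : C(X, E)) ∈ A)
    (hP : HasPropertyP A (fun f => ‖f‖))
    (hconst : ∀ e : E, ContinuousMap.const X e ∈ A)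
    (T S : ↥A →ₗ[ℂ] C(Y, ℂ)) (hTS : JointlySeparating A T S)
    (φ : Y → X) (hφ : ∀ y ∈ Y1 A T S, IsSupportPoint A T S y (φ y)) :
    ∃ ΛT ΛS : Y → (E →L[ℂ] ℂ),
      (∀ y ∈ {y ∈ Y1 A T S | Continuous fun f : ↥A => T f y},
        (∀ e : E, ΛT y e = T ⟨ContinuousMap.const X e, hconst e⟩ y) ∧
        ∀ f : ↥A, T f y = ΛT y ((f : C(X, E)) (φ y))) ∧
      (∀ y ∈ {y ∈ Y1 A T S | Continuous fun f : ↥A => S f y},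
        (∀ e : E, ΛS y e = S ⟨ContinuousMap.const X e, hconst e⟩ y) ∧
        ∀ f : ↥A, S f y = ΛS y ((f : C(X, E)) (φ y))) := by
  refine ⟨representingFunctional A T hconst, representingFunctional A S hconst, ?_, ?_⟩
  · rintro y ⟨hy, hc⟩
    exact ⟨representingFunctional_apply A hconst hc,
      apply_eq_representingFunctional_apply A hconst hP hc fun _ hh =>
        (hTS.apply_eq_zero_of_eventually_eq_zero A hB hmod hy (hφ y hy) hh).1⟩
  · rintro y ⟨hy, hc⟩
    exact ⟨representingFunctional_apply A hconst hc,
      apply_eq_representingFunctional_apply A hconst hP hc fun _ hh =>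
        (hTS.apply_eq_zero_of_eventually_eq_zero A hB hmod hy (hφ y hy) hh).2⟩
end

section
/- Suppose (A(X,E), ‖·‖_∞) has property (P) and A(X,E) contains the constant functions. Let Y₀ = Y ∖ Y₁. Then Y_cT ∪ Y₀ and Y_cS ∪ Y₀ are closed subsets of Y. -/
open Set Filter Topology

variable {X Y E : Type*} [TopologicalSpace X] [CompactSpace X] [T2Space X]
  [TopologicalSpace Y] [CompactSpace Y] [T2Space Y]
  [NormedAddCommGroup E] [NormedSpace ℂ E] [CompleteSpace E]
  (A : Submodule ℂ C(X, E))

/-! ### Auxiliary lemmas -/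

section Aux

variable {A}
variable {B : Subalgebra ℂ C(X, ℂ)} {nB : C(X, ℂ) → ℝ}
  (hB : IsRegularBanachFunctionAlgebra B nB)
  (hmod : ∀ g ∈ B, ∀ f : ↥A, g • (f : C(X, E)) ∈ A)
  (T S : ↥A →ₗ[ℂ] C(Y, ℂ))

include hB hmod in
/-- If a function's cozero set is covered by a compact set each of whose points is
"inert" for `y`, then `Tf(y) = Sf(y) = 0`. -/
theorem vanish_of_inert
    {y : Y} {K : Set X} (hK : IsCompact K) (f : ↥A) (hcoz : coz A f ⊆ K)
    (W : ∀ z ∈ K, ∃ V ∈ 𝓝 z, ∀ g : ↥A, coz A g ⊆ V → T g y = 0 ∧ S g y = 0) :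
    T f y = 0 ∧ S f y = 0 := by
  have W' : ∀ z : ↥K, ∃ V, V ∈ 𝓝 (z : X) ∧ ∀ g : ↥A, coz A g ⊆ V → T g y = 0 ∧ S g y = 0 := by
    intro z
    obtain ⟨V, hV1, hV2⟩ := W z z.2
    exact ⟨V, hV1, hV2⟩
  choose V hVmem hVprop using W'
  have hcov : K ⊆ ⋃ z : K, interior (V z) := fun x hx =>
    mem_iUnion.2 ⟨⟨x, hx⟩, mem_interior_iff_mem_nhds.2 (hVmem ⟨x, hx⟩)⟩
  obtain ⟨t, ht⟩ := hK.elim_finite_subcover (fun z : K => interior (V z))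
    (fun _ => isOpen_interior) hcov
  set n := t.card with hn
  set e : Fin n ≃ {z // z ∈ t} := t.equivFin.symm with he
  set U : Fin n → Set X := fun i => interior (V (e i).1) with hU
  have hUo : ∀ i, IsOpen (U i) := fun i => isOpen_interior
  have hKU : K ⊆ ⋃ i, U i := by
    intro x hx
    obtain ⟨z, hz⟩ := mem_iUnion₂.1 (ht hx)
    refine mem_iUnion.2 ⟨t.equivFin ⟨z, hz.1⟩, ?_⟩
    have hee : e (t.equivFin ⟨z, hz.1⟩) = ⟨z, hz.1⟩ := t.equivFin.symm_apply_apply _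
    rw [hU]
    show x ∈ interior (V (e (t.equivFin ⟨z, hz.1⟩)).1)
    rw [hee]
    exact hz.2
  obtain ⟨g, hgB, hgs, hg1⟩ := hB.regular K hK n U hUo hKU
  set F : Fin n → ↥A := fun i => ⟨g i • (f : C(X, E)), hmod _ (hgB i) f⟩ with hF
  have hfeq : f = ∑ i, F i := by
    apply Subtype.ext
    have : ((∑ i, F i : ↥A) : C(X, E)) = ∑ i, (g i • (f : C(X, E))) := by
      push_cast [hF]; rfl
    rw [this]
    ext x
    rw [ContinuousMap.sum_apply]
    by_cases hx : (f : C(X, E)) x = 0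
    · simp [hx]
    · have hxK : x ∈ K := hcoz hx
      have : ∀ i, (g i • (f : C(X, E))) x = g i x • (f : C(X, E)) x := fun i => rfl
      simp_rw [this, ← Finset.sum_smul, hg1 x hxK, one_smul]
  have hcozF : ∀ i, coz A (F i) ⊆ V (e i).1 := by
    intro i x hx
    have hgx : g i x ≠ 0 := by
      intro h0
      apply hx
      show (g i • (f : C(X, E))) x = 0
      show g i x • (f : C(X, E)) x = 0
      rw [h0, zero_smul]
    exact interior_subset (hgs i (subset_closure hgx))
  constructor
  · have : T f y = ∑ i, T (F i) y := by
      rw [hfeq, map_sum, ContinuousMap.sum_apply]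
    rw [this]
    exact Finset.sum_eq_zero fun i _ =>
      (hVprop (e i).1 (F i) (hcozF i)).1
  · have : S f y = ∑ i, S (F i) y := by
      rw [hfeq, map_sum, ContinuousMap.sum_apply]
    rw [this]
    exact Finset.sum_eq_zero fun i _ =>
      (hVprop (e i).1 (F i) (hcozF i)).2

theorem not_supportPoint_inert {y : Y} {z : X} (h : ¬ IsSupportPoint A T S y z) :
    ∃ V ∈ 𝓝 z, ∀ g : ↥A, coz A g ⊆ V → T g y = 0 ∧ S g y = 0 := by
  unfold IsSupportPoint at h
  push_neg at h
  obtain ⟨V, hV, hprop⟩ := h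
  exact ⟨V, hV, fun g hg => hprop g hg⟩

include hB hmod

theorem exists_supportPoint {y : Y} (hy : y ∈ Y1 A T S) :
    ∃ x, IsSupportPoint A T S y x := by
  by_contra h
  push_neg at h
  obtain ⟨f, hf⟩ := hy.1
  exact hf (vanish_of_inert hB hmod T S isCompact_univ f (subset_univ _)
    (fun z _ => not_supportPoint_inert T S (h z))).1

/-- Decomposition of an element of `A` subordinate to a finite open cover of `X`. -/
theorem exists_decomp {n : ℕ} (U : Fin n → Set X)
    (hUo : ∀ i, IsOpen (U i)) (hUc : (univ : Set X) ⊆ ⋃ i, U i) (k : ↥A) :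
    ∃ G : Fin n → ↥A, k = ∑ i, G i ∧ ∀ i, coz A (G i) ⊆ U i := by
  obtain ⟨g, hgB, hgs, hg1⟩ := hB.regular univ isCompact_univ n U hUo hUc
  refine ⟨fun i => ⟨g i • (k : C(X, E)), hmod _ (hgB i) k⟩, ?_, ?_⟩
  · apply Subtype.ext
    have : ((∑ i, (⟨g i • (k : C(X, E)), hmod _ (hgB i) k⟩ : ↥A) : ↥A) : C(X, E))
        = ∑ i, (g i • (k : C(X, E))) := by push_cast; rfl
    rw [this]
    ext x
    rw [ContinuousMap.sum_apply]
    have : ∀ i, (g i • (k : C(X, E))) x = g i x • (k : C(X, E)) x := fun i => rfl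
    simp_rw [this, ← Finset.sum_smul, hg1 x (mem_univ x), one_smul]
  · intro i x hx
    have hgx : g i x ≠ 0 := by
      intro h0
      apply hx
      show g i x • (k : C(X, E)) x = 0
      rw [h0, zero_smul]
    exact hgs i (subset_closure hgx)

theorem supportPoint_unique (hTS : JointlySeparating A T S)
    {y : Y} (hy : y ∈ Y1 A T S) {x₁ x₂ : X}
    (h1 : IsSupportPoint A T S y x₁) (h2 : IsSupportPoint A T S y x₂) : x₁ = x₂ := by
  by_contra hne
  obtain ⟨V₁, V₂, hV₁o, hV₂o, hx₁, hx₂, hdisj⟩ := t2_separation hne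
  obtain ⟨K, hKnhds, hKcl, hKsub⟩ := exists_mem_nhds_isClosed_subset (hV₁o.mem_nhds hx₁)
  obtain ⟨f₁, hcoz₁, halt₁⟩ := h1 K hKnhds
  obtain ⟨f₂, hcoz₂, halt₂⟩ := h2 V₂ (hV₂o.mem_nhds hx₂)
  have hd12 : coz A f₁ ∩ coz A f₂ = ∅ := by
    apply eq_empty_of_subset_empty
    intro x hx
    exact (hdisj.inter_eq ▸ ⟨hKsub (hcoz₁ hx.1), hcoz₂ hx.2⟩ : x ∈ (∅ : Set X))
  have hd21 : coz A f₂ ∩ coz A f₁ = ∅ := by rw [inter_comm]; exact hd12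
  have ht12 := hTS f₁ f₂ hd12 y
  have ht21 := hTS f₂ f₁ hd21 y
  -- cover of X by V₁ and Kᶜ
  set U : Fin 2 → Set X := ![V₁, Kᶜ] with hUdef
  have hUo : ∀ i, IsOpen (U i) := by
    intro i
    fin_cases i
    · exact hV₁o
    · exact hKcl.isOpen_compl
  have hUc : (univ : Set X) ⊆ ⋃ i, U i := by
    intro x _
    by_cases hx : x ∈ K
    · exact mem_iUnion.2 ⟨0, hKsub hx⟩
    · exact mem_iUnion.2 ⟨1, hx⟩
  rcases halt₁ with hT1 | hS1 <;> rcases halt₂ with hT2 | hS2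
  · -- T f₁ y ≠ 0, T f₂ y ≠ 0 : use k with S k y ≠ 0
    obtain ⟨k, hk⟩ := hy.2
    obtain ⟨G, hkeq, hcozG⟩ := exists_decomp hB hmod U hUo hUc k
    have hsum : S k y = S (G 0) y + S (G 1) y := by
      rw [hkeq, map_sum]
      rw [show (∑ i, S (G i)) = S (G 0) + S (G 1) from Fin.sum_univ_two _]
      rfl
    have : S (G 0) y ≠ 0 ∨ S (G 1) y ≠ 0 := by
      by_contra h0
      push_neg at h0
      rw [hsum, h0.1, h0.2, add_zero] at hk
      exact hk rfl
    rcases this with h | h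
    · have hd : coz A f₂ ∩ coz A (G 0) = ∅ := by
        apply eq_empty_of_subset_empty
        intro x hx
        have := hcozG 0 hx.2
        rw [hUdef] at this
        exact (hdisj.symm.inter_eq ▸ ⟨hcoz₂ hx.1, this⟩ : x ∈ (∅ : Set X))
      exact h (by
        have := hTS f₂ (G 0) hd y
        rcases mul_eq_zero.1 this with h' | h'
        · exact absurd h' hT2
        · exact h')
    · have hd : coz A f₁ ∩ coz A (G 1) = ∅ := by
        apply eq_empty_of_subset_empty
        intro x hx
        have h1' := hcozG 1 hx.2
        rw [hUdef] at h1'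
        exact absurd (hcoz₁ hx.1) h1'
      exact h (by
        have := hTS f₁ (G 1) hd y
        rcases mul_eq_zero.1 this with h' | h'
        · exact absurd h' hT1
        · exact h')
  · exact (mul_ne_zero hT1 hS2) ht12
  · exact (mul_ne_zero hT2 hS1) ht21
  · -- S f₁ y ≠ 0, S f₂ y ≠ 0 : use k with T k y ≠ 0
    obtain ⟨k, hk⟩ := hy.1
    obtain ⟨G, hkeq, hcozG⟩ := exists_decomp hB hmod U hUo hUc k
    have hsum : T k y = T (G 0) y + T (G 1) y := by
      rw [hkeq, map_sum]
      rw [show (∑ i, T (G i)) = T (G 0) + T (G 1) from Fin.sum_univ_two _]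
      rfl
    have : T (G 0) y ≠ 0 ∨ T (G 1) y ≠ 0 := by
      by_contra h0
      push_neg at h0
      rw [hsum, h0.1, h0.2, add_zero] at hk
      exact hk rfl
    rcases this with h | h
    · have hd : coz A (G 0) ∩ coz A f₂ = ∅ := by
        apply eq_empty_of_subset_empty
        intro x hx
        have := hcozG 0 hx.1
        rw [hUdef] at this
        exact (hdisj.inter_eq ▸ ⟨this, hcoz₂ hx.2⟩ : x ∈ (∅ : Set X))
      exact h (by
        have := hTS (G 0) f₂ hd y
        rcases mul_eq_zero.1 this with h' | h'
        · exact h'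
        · exact absurd h' hS2)
    · have hd : coz A (G 1) ∩ coz A f₁ = ∅ := by
        apply eq_empty_of_subset_empty
        intro x hx
        have h1' := hcozG 1 hx.1
        rw [hUdef] at h1'
        exact absurd (hcoz₁ hx.2) h1'
      exact h (by
        have := hTS (G 1) f₁ hd y
        rcases mul_eq_zero.1 this with h' | h'
        · exact h'
        · exact absurd h' hS1)

theorem vanish_of_eventually_zero {y : Y} (hy : y ∈ Y1 A T S) {x : X}
    (hx : ∀ z, IsSupportPoint A T S y z → z = x)
    (f : ↥A) (hf : ∀ᶠ z in 𝓝 x, (f : C(X, E)) z = 0) :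
    T f y = 0 ∧ S f y = 0 := by
  have hxnot : x ∉ closure (coz A f) := by
    intro hxc
    obtain ⟨s, hs, hsz⟩ := hf.exists_mem
    have hxint : x ∈ interior s := mem_interior_iff_mem_nhds.2 hs
    obtain ⟨w, hw⟩ := mem_closure_iff.1 hxc (interior s) isOpen_interior hxint
    exact hw.2 (hsz w (interior_subset hw.1))
  refine vanish_of_inert hB hmod T S
    (IsCompact.of_isClosed_subset isCompact_univ isClosed_closure (subset_univ _))
    f subset_closure ?_
  intro z hz
  have hzne : ¬ IsSupportPoint A T S y z := by
    intro hsp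
    exact hxnot ((hx z hsp) ▸ hz)
  exact not_supportPoint_inert T S hzne

end Aux


section Main

variable {A}

/-- Constants as a linear map into `A`. -/
def constL (hconst : ∀ e : E, ContinuousMap.const X e ∈ A) : E →ₗ[ℂ] ↥A where
  toFun e := ⟨ContinuousMap.const X e, hconst e⟩
  map_add' e e' := Subtype.ext (by ext x; simp)
  map_smul' c e := Subtype.ext (by ext x; simp)

theorem closed_aux {B : Subalgebra ℂ C(X, ℂ)} {nB : C(X, ℂ) → ℝ}
    (hB : IsRegularBanachFunctionAlgebra B nB)
    (hmod : ∀ g ∈ B, ∀ f : ↥A, g • (f : C(X, E)) ∈ A)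
    (hP : HasPropertyP A (fun f => ‖f‖))
    (hconst : ∀ e : E, ContinuousMap.const X e ∈ A)
    (T S : ↥A →ₗ[ℂ] C(Y, ℂ)) (hTS : JointlySeparating A T S) :
    IsClosed ({y ∈ Y1 A T S | Continuous fun f : ↥A => T f y} ∪ (Y1 A T S)ᶜ) := by
  rcases isEmpty_or_nonempty X with hX | hX
  · have hsub : Subsingleton ↥A :=
      ⟨fun f g => Subtype.ext (ContinuousMap.ext fun x => isEmptyElim x)⟩
    have hY1 : Y1 A T S = ∅ := by
      rw [eq_empty_iff_forall_notMem]
      intro y hy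
      obtain ⟨f, hf⟩ := hy.1
      have hf0 : f = 0 := Subsingleton.elim f 0
      rw [hf0, map_zero] at hf
      exact hf rfl
    rw [hY1]
    have : {y ∈ (∅ : Set Y) | Continuous fun f : ↥A => T f y} ∪ (∅ : Set Y)ᶜ = univ := by
      rw [compl_empty, union_univ]
    rw [this]
    exact isClosed_univ
  · apply isClosed_of_closure_subset
    intro y0 hy0
    by_cases hy1 : y0 ∈ Y1 A T S
    swap
    · exact Or.inr hy1
    refine Or.inl ⟨hy1, ?_⟩
    obtain ⟨⟨p, hp⟩, ⟨q, hq⟩⟩ := id hy1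
    set SC : Set Y := {y ∈ Y1 A T S | Continuous fun f : ↥A => T f y} with hSC
    set N : Set Y := (T p) ⁻¹' ({0}ᶜ) ∩ (S q) ⁻¹' ({0}ᶜ) with hN
    have hNo : IsOpen N := ((isOpen_compl_singleton).preimage (T p).continuous).inter
      ((isOpen_compl_singleton).preimage (S q).continuous)
    have hy0N : y0 ∈ N := ⟨hp, hq⟩
    have hNsub : N ⊆ Y1 A T S := fun z hz => ⟨⟨p, hz.1⟩, ⟨q, hz.2⟩⟩
    have hclos : y0 ∈ closure SC := by
      rw [mem_closure_iff] at hy0 ⊢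
      intro O hO hyO
      obtain ⟨z, hz1, hz2⟩ := hy0 (O ∩ N) (hO.inter hNo) ⟨hyO, hy0N⟩
      rcases hz2 with h | h
      · exact ⟨z, hz1.1, h⟩
      · exact absurd (hNsub hz1.2) h
    -- the embedding of constants is continuous
    have hconstL_bound : ∀ e : E, ‖constL hconst e‖ ≤ 1 * ‖e‖ := by
      intro e
      rw [one_mul]
      show ‖ContinuousMap.const X e‖ ≤ ‖e‖
      rw [ContinuousMap.norm_le _ (norm_nonneg e)]
      intro x; simp
    have hconstL_cont : Continuous (constL hconst) :=
      AddMonoidHomClass.continuous_of_bound (constL hconst) 1 hconstL_bound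
    have hmapadd : ∀ (z : Y) (f g : ↥A), T (f + g) z = T f z + T g z := fun z f g => by
      rw [map_add]; rfl
    have hmapsmul : ∀ (z : Y) (c : ℂ) (f : ↥A), T (c • f) z = c * T f z := fun z c f => by
      rw [map_smul]; rfl
    -- the family of functionals e ↦ T(const e)(z) for z a continuity point
    have hΛlin : ∀ z : Y, ∃ L : E →ₗ[ℂ] ℂ, ∀ e : E, L e = T (constL hconst e) z := by
      intro z
      refine ⟨{ toFun := fun e => T (constL hconst e) z, map_add' := ?_, map_smul' := ?_ }, fun e => rfl⟩
      · intro e e'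
        show T (constL hconst (e + e')) z = T (constL hconst e) z + T (constL hconst e') z
        rw [map_add, hmapadd z]
      · intro c e
        show T (constL hconst (c • e)) z = c • T (constL hconst e) z
        rw [map_smul, hmapsmul z]
        rfl
    choose Λlin hΛlin_eq using hΛlin
    set Λ : {z : Y // z ∈ SC} → (E →L[ℂ] ℂ) := fun z =>
      { toLinearMap := Λlin z.1
        cont := by
          have hc : Continuous ((fun f : ↥A => T f z.1) ∘ (constL hconst)) :=
            Continuous.comp z.2.2 hconstL_cont
          have : (fun e : E => Λlin z.1 e) = ((fun f : ↥A => T f z.1) ∘ (constL hconst)) := by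
            funext e
            exact hΛlin_eq z.1 e
          show Continuous fun e : E => Λlin z.1 e
          rw [this]
          exact hc } with hΛ
    obtain ⟨M, hM⟩ := banach_steinhaus (g := Λ)
      (fun e => ⟨‖T (constL hconst e)‖, fun i => by
        show ‖Λlin i.1 e‖ ≤ _
        rw [hΛlin_eq i.1 e]
        exact ContinuousMap.norm_coe_le_norm _ i.1⟩)
    -- the uniform bound on continuity points
    have hbound : ∀ z ∈ SC, ∀ f : ↥A, ‖T f z‖ ≤ M * ‖f‖ := by
      intro z hz f
      obtain ⟨x', hx'⟩ := exists_supportPoint hB hmod T S hz.1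
      have huniq : ∀ w, IsSupportPoint A T S z w → w = x' := fun w hw =>
        supportPoint_unique hB hmod T S hTS hz.1 hw hx'
      set e : E := (f : C(X, E)) x' with he
      set gA : ↥A := f - constL hconst e with hgA
      have hgA0 : (gA : C(X, E)) x' = 0 := by
        show ((f - constL hconst e : ↥A) : C(X, E)) x' = 0
        rw [Submodule.coe_sub, ContinuousMap.sub_apply]
        show (f : C(X, E)) x' - (ContinuousMap.const X e) x' = 0
        rw [ContinuousMap.const_apply, he, sub_self]
      obtain ⟨u, humem, huvan, hulim⟩ := hP gA x' hgA0
      have hTu : ∀ n, T ⟨u n, humem n⟩ z = 0 := fun n =>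
        (vanish_of_eventually_zero hB hmod T S hz.1 huniq ⟨u n, humem n⟩ (huvan n)).1
      have hTgA : T gA z = 0 := by
        have hnorm : ∀ n, ‖(⟨u n, humem n⟩ : ↥A) - gA‖ = ‖u n - (gA : C(X, E))‖ := by
          intro n
          rfl
        have hconv : Tendsto (fun n => (⟨u n, humem n⟩ : ↥A)) atTop (𝓝 gA) := by
          rw [tendsto_iff_norm_sub_tendsto_zero]
          simp only [hnorm]
          exact hulim
        have h2 : Tendsto (fun n => T (⟨u n, humem n⟩ : ↥A) z) atTop (𝓝 (T gA z)) :=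
          (hz.2.tendsto gA).comp hconv
        have h3 : Tendsto (fun n => T (⟨u n, humem n⟩ : ↥A) z) atTop (𝓝 (0 : ℂ)) := by
          simp only [hTu]
          exact tendsto_const_nhds
        exact tendsto_nhds_unique h2 h3
      have hfz : T f z = T (constL hconst e) z := by
        have hdec : f = gA + constL hconst e := by
          rw [hgA, sub_add_cancel]
        conv_lhs => rw [hdec]
        rw [map_add]
        show T gA z + T (constL hconst e) z = _
        rw [hTgA, zero_add]
      have hM0 : (0 : ℝ) ≤ M := le_trans (norm_nonneg _) (hM ⟨z, hz⟩)
      calc ‖T f z‖ = ‖Λ ⟨z, hz⟩ e‖ := by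
            rw [hfz]
            show _ = ‖Λlin z e‖
            rw [hΛlin_eq z e]
        _ ≤ ‖Λ ⟨z, hz⟩‖ * ‖e‖ := (Λ _).le_opNorm e
        _ ≤ M * ‖f‖ := by
            apply mul_le_mul (hM _) ?_ (norm_nonneg e) hM0
            exact ContinuousMap.norm_coe_le_norm (f : C(X, E)) x'
    have hbound0 : ∀ f : ↥A, ‖T f y0‖ ≤ M * ‖f‖ := by
      intro f
      have hcl : closure SC ⊆ {z : Y | ‖T f z‖ ≤ M * ‖f‖} :=
        closure_minimal (fun z hz => hbound z hz f)
          (isClosed_le ((T f).continuous.norm) continuous_const)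
      exact hcl hclos
    exact AddMonoidHomClass.continuous_of_bound
      ({ toFun := fun f : ↥A => T f y0,
         map_add' := fun f g => hmapadd y0 f g,
         map_smul' := fun c f => by
           show T (c • f) y0 = c • T f y0
           rw [hmapsmul]
           rfl } : ↥A →ₗ[ℂ] ℂ) M hbound0

end Main

/-- **Lemma 3.11.** Suppose `(A(X,E), ‖·‖_∞)` has property (P) and `A(X,E)` contains the
constants.  With `Y₀ = Y \ Y₁`, the sets `Y_cT ∪ Y₀` and `Y_cS ∪ Y₀` are closed in `Y`. -/


theorem isClosed_Yc_union_Y0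
    (B : Subalgebra ℂ C(X, ℂ)) (nB : C(X, ℂ) → ℝ)
    (hB : IsRegularBanachFunctionAlgebra B nB)
    (hmod : ∀ g ∈ B, ∀ f : ↥A, g • (f : C(X, E)) ∈ A)
    (hP : HasPropertyP A (fun f => ‖f‖))
    (hconst : ∀ e : E, ContinuousMap.const X e ∈ A)
    (T S : ↥A →ₗ[ℂ] C(Y, ℂ)) (hTS : JointlySeparating A T S) :
    IsClosed ({y ∈ Y1 A T S | Continuous fun f : ↥A => T f y} ∪ (Y1 A T S)ᶜ) ∧
    IsClosed ({y ∈ Y1 A T S | Continuous fun f : ↥A => S f y} ∪ (Y1 A T S)ᶜ) := by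
  constructor
  · exact closed_aux hB hmod hP hconst T S hTS
  · have hTS' : JointlySeparating A S T := by
      intro f g h y
      have := hTS g f (by rw [inter_comm]; exact h) y
      rw [mul_comm]
      exact this
    have hY1 : Y1 A S T = Y1 A T S := by
      ext y
      exact ⟨fun h => ⟨h.2, h.1⟩, fun h => ⟨h.2, h.1⟩⟩
    have := closed_aux hB hmod hP hconst S T hTS'
    rwa [hY1] at this
end

section
/- Suppose E is finite dimensional and A(X,E) contains the constant functions. Then the maps Λ^T, Λ^S : Y_c → E* defined by Λ^T_y(e) = T(ẽ)(y) and Λ^S_y(e) = S(ẽ)(y) (ẽ the constant function with value e) are continuous from Y_c into E* with the norm topology. -/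
open Set Filter Topology

variable {X Y E : Type*} [TopologicalSpace X] [CompactSpace X] [T2Space X]
  [TopologicalSpace Y] [CompactSpace Y] [T2Space Y]
  [NormedAddCommGroup E] [NormedSpace ℂ E] [CompleteSpace E]
  (A : Submodule ℂ C(X, E))

lemma representing_functional_continuous_aux
    [FiniteDimensional ℂ E]
    (hconst : ∀ e : E, ContinuousMap.const X e ∈ A)
    (T : ↥A →ₗ[ℂ] C(Y, ℂ)) (Yc : Set Y) (Λ : Y → (E →L[ℂ] ℂ))
    (h : ∀ y ∈ Yc, ∀ e : E, Λ y e = T ⟨ContinuousMap.const X e, hconst e⟩ y) :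
    ContinuousOn Λ Yc := by
  classical
  let b := Module.finBasis ℂ E
  set F : Y → (E →L[ℂ] ℂ) := fun y =>
    ∑ i, (T ⟨ContinuousMap.const X (b i), hconst _⟩ y) •
      (LinearMap.toContinuousLinearMap (b.coord i)) with hF
  have hFcont : Continuous F := by
    apply continuous_finset_sum
    intro i _
    exact ((T ⟨ContinuousMap.const X (b i), hconst _⟩).continuous).smul continuous_const
  have hkey : ∀ e : E, (⟨ContinuousMap.const X e, hconst e⟩ : ↥A) =
      ∑ i, (b.repr e i) • (⟨ContinuousMap.const X (b i), hconst _⟩ : ↥A) := by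
    intro e
    apply Subtype.ext
    push_cast
    ext x
    simp only [ContinuousMap.coe_sum, ContinuousMap.coe_smul, Finset.sum_apply,
      Pi.smul_apply, ContinuousMap.const_apply]
    exact (b.sum_repr e).symm
  have hagree : ∀ y ∈ Yc, Λ y = F y := by
    intro y hy
    ext e
    rw [h y hy e, hkey e]
    simp only [hF, map_sum, ContinuousMap.coe_sum, Finset.sum_apply,
      ContinuousLinearMap.coe_sum', ContinuousLinearMap.coe_smul', Pi.smul_apply,
      smul_eq_mul, Module.Basis.coord_apply, LinearMap.coe_toContinuousLinearMap']
    refine Finset.sum_congr rfl fun i _ => ?_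
    rw [map_smul]
    simp [mul_comm]
  exact hFcont.continuousOn.congr hagree

/-- **Theorem 3.13 (ii).** Suppose `E` is finite dimensional and `A(X,E)` contains the
constants.  The maps `Λᵀ, Λˢ : Y_c → E*`, `Λᵀ_y(e) = T(ẽ)(y)` and `Λˢ_y(e) = S(ẽ)(y)`,
are continuous into `E*` with the norm topology. -/
theorem representing_functionals_continuous
    [FiniteDimensional ℂ E]
    (B : Subalgebra ℂ C(X, ℂ)) (nB : C(X, ℂ) → ℝ)
    (hB : IsRegularBanachFunctionAlgebra B nB)
    (hmod : ∀ g ∈ B, ∀ f : ↥A, g • (f : C(X, E)) ∈ A)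
    (hconst : ∀ e : E, ContinuousMap.const X e ∈ A)
    (T S : ↥A →ₗ[ℂ] C(Y, ℂ)) (hTS : JointlySeparating A T S) :
    ∀ Yc : Set Y,
      Yc = {y ∈ Y1 A T S | Continuous fun f : ↥A => T f y} ∩
          {y ∈ Y1 A T S | Continuous fun f : ↥A => S f y} →
      (∀ ΛT : Y → (E →L[ℂ] ℂ),
        (∀ y ∈ Yc, ∀ e : E, ΛT y e = T ⟨ContinuousMap.const X e, hconst e⟩ y) →
        ContinuousOn ΛT Yc) ∧
      (∀ ΛS : Y → (E →L[ℂ] ℂ),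
        (∀ y ∈ Yc, ∀ e : E, ΛS y e = S ⟨ContinuousMap.const X e, hconst e⟩ y) →
        ContinuousOn ΛS Yc) := by
  intro Yc _
  constructor
  · intro ΛT hΛT
    exact representing_functional_continuous_aux A hconst T Yc ΛT hΛT
  · intro ΛS hΛS
    exact representing_functional_continuous_aux A hconst S Yc ΛS hΛS
end

section
/- Let T, S : A(X,E) → C(Y,F) be jointly separating linear maps. For v* ∈ F*, the maps v*∘T, v*∘S : A(X,E) → C(Y) are jointly separating; let Y₁^{v*} = (⋃_f coz(v*∘Tf)) ∩ (⋃_f coz(v*∘Sf)) and let φ_{v*}(y) denote the unique support point of y ∈ Y₁^{v*} for the pair (v*∘T, v*∘S). Then for any v₁*, v₂* ∈ F* and any y ∈ Y₁^{v₁*} ∩ Y₁^{v₂*} one has φ_{v₁*}(y) = φ_{v₂*}(y). -/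
open Set Filter Topology

variable {X Y E F : Type*} [TopologicalSpace X] [CompactSpace X] [T2Space X]
  [TopologicalSpace Y] [CompactSpace Y] [T2Space Y]
  [NormedAddCommGroup E] [NormedSpace ℂ E] [CompleteSpace E]
  [NormedAddCommGroup F] [NormedSpace ℂ F] [CompleteSpace F]
  (A : Submodule ℂ C(X, E))

/-- `T, S : A(X,E) → C(Y,F)` are jointly separating: `coz(Tf) ∩ coz(Sg) = ∅` whenever
`coz(f) ∩ coz(g) = ∅`. -/
def JointlySeparatingV (T S : ↥A →ₗ[ℂ] C(Y, F)) : Prop :=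
  ∀ f g : ↥A, coz A f ∩ coz A g = ∅ → {y | T f y ≠ 0} ∩ {y | S g y ≠ 0} = ∅

/-- The set `Y₁ = (⋃_f coz(Tf)) ∩ (⋃_f coz(Sf))`. -/
def Y1V (T S : ↥A →ₗ[ℂ] C(Y, F)) : Set Y :=
  {y | (∃ f : ↥A, T f y ≠ 0) ∧ (∃ f : ↥A, S f y ≠ 0)}

/-- For `v* ∈ F*`, the set `Y₁^{v*} = (⋃_f coz(v*∘Tf)) ∩ (⋃_f coz(v*∘Sf))`. -/
def Y1v (T S : ↥A →ₗ[ℂ] C(Y, F)) (v : F →L[ℂ] ℂ) : Set Y :=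
  {y | (∃ f : ↥A, v (T f y) ≠ 0) ∧ (∃ f : ↥A, v (S f y) ≠ 0)}

/-- `x` is a support point of `y` for the pair of (scalar-valued) maps `T', S'`. -/
def IsSupportPointFor (T' S' : ↥A → Y → ℂ) (y : Y) (x : X) : Prop :=
  ∀ V ∈ 𝓝 x, ∃ f : ↥A, coz A f ⊆ V ∧ (T' f y ≠ 0 ∨ S' f y ≠ 0)

/-- **Step I of Theorem 4.3.** If `T, S : A(X,E) → C(Y,F)` are jointly separating, then
for every `v* ∈ F*` the pair `(v*∘T, v*∘S)` is jointly separating, and for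
`v₁*, v₂* ∈ F*` the support points of any `y ∈ Y₁^{v₁*} ∩ Y₁^{v₂*}` for the two pairs
coincide. -/
theorem supportPoint_independent_of_functional
    (B : Subalgebra ℂ C(X, ℂ)) (nB : C(X, ℂ) → ℝ)
    (hB : IsRegularBanachFunctionAlgebra B nB)
    (hmod : ∀ g ∈ B, ∀ f : ↥A, g • (f : C(X, E)) ∈ A)
    (T S : ↥A →ₗ[ℂ] C(Y, F)) (hTS : JointlySeparatingV A T S) :
    (∀ v : F →L[ℂ] ℂ, ∀ f g : ↥A, coz A f ∩ coz A g = ∅ →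
      ∀ y : Y, v (T f y) * v (S g y) = 0) ∧
    ∀ v₁ v₂ : F →L[ℂ] ℂ, ∀ y : Y, y ∈ Y1v A T S v₁ → y ∈ Y1v A T S v₂ →
      ∀ x₁ x₂ : X,
        IsSupportPointFor A (fun f y => v₁ (T f y)) (fun f y => v₁ (S f y)) y x₁ →
        IsSupportPointFor A (fun f y => v₂ (T f y)) (fun f y => v₂ (S f y)) y x₂ →
        x₁ = x₂ := by

  have vne : ∀ (v : F →L[ℂ] ℂ) (w : F), v w ≠ 0 → w ≠ 0 := by
    intro v w h h0
    exact h (by simp [h0])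
  have sep : ∀ f g : ↥A, coz A f ∩ coz A g = ∅ → ∀ z : Y,
      ¬ (T f z ≠ 0 ∧ S g z ≠ 0) := by
    intro f g hfg z hz
    exact (Set.eq_empty_iff_forall_notMem.mp (hTS f g hfg) z) hz
  constructor
  · intro v f g hfg y
    rcases eq_or_ne (T f y) 0 with h1 | h1
    · simp [h1]
    · have h2 : S g y = 0 := by
        by_contra h2
        exact sep f g hfg y ⟨h1, h2⟩
      simp [h2]
  · intro v₁ v₂ y hy₁ hy₂ x₁ x₂ hx₁ hx₂
    by_contra hne
    obtain ⟨V₁, V₂, hV₁o, hV₂o, hx₁V, hx₂V, hVd⟩ := t2_separation hne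
    have cozd : ∀ f g : ↥A, coz A f ⊆ V₁ → coz A g ⊆ V₂ → coz A f ∩ coz A g = ∅ := by
      intro f g hf hg
      apply Set.eq_empty_iff_forall_notMem.mpr
      intro x ⟨hx1, hx2⟩
      exact Set.disjoint_left.mp hVd (hf hx1) (hg hx2)
    -- partition of unity subordinate to V₂ and {x₂}ᶜ
    obtain ⟨g, hgB, hgsupp, hgsum⟩ := hB.regular Set.univ isCompact_univ 2
      ![V₂, {x₂}ᶜ]
      (by
        intro i
        fin_cases i
        · simpa using hV₂o
        · simpa using isOpen_compl_singleton)
      (by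
        intro x _
        by_cases hx : x = x₂
        · exact Set.mem_iUnion.mpr ⟨0, by simpa [hx] using hx₂V⟩
        · exact Set.mem_iUnion.mpr ⟨1, by simpa using hx⟩)
    have hg0 : closure {x | g 0 x ≠ 0} ⊆ V₂ := by simpa using hgsupp 0
    have hg1 : closure {x | g 1 x ≠ 0} ⊆ {x₂}ᶜ := by simpa using hgsupp 1
    -- support point neighborhood for x₂
    set W : Set X := V₂ ∩ (closure {x | g 1 x ≠ 0})ᶜ with hW
    have hWnhds : W ∈ 𝓝 x₂ := by
      apply IsOpen.mem_nhds
      · exact hV₂o.inter isClosed_closure.isOpen_compl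
      · exact ⟨hx₂V, fun hc => (hg1 hc) rfl⟩
    obtain ⟨f', hf'coz, hf'ne⟩ := hx₂ W hWnhds
    have hf'V₂ : coz A f' ⊆ V₂ := fun x hx => (hf'coz hx).1
    -- decomposition of an arbitrary h ∈ A
    have decomp : ∀ h : ↥A, ∃ h1 h2 : ↥A, h = h1 + h2 ∧
        coz A h1 ⊆ V₂ ∧ coz A h2 ∩ coz A f' = ∅ := by
      intro h
      refine ⟨⟨g 0 • (h : C(X, E)), hmod (g 0) (hgB 0) h⟩,
        ⟨g 1 • (h : C(X, E)), hmod (g 1) (hgB 1) h⟩, ?_, ?_, ?_⟩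
      · apply Subtype.ext
        ext x
        have hsum : g 0 x + g 1 x = 1 := by
          have := hgsum x (Set.mem_univ x)
          simpa [Fin.sum_univ_two] using this
        show (h : C(X, E)) x = g 0 x • (h : C(X, E)) x + g 1 x • (h : C(X, E)) x
        rw [← add_smul, hsum, one_smul]
      · intro x hx
        have hgx : g 0 x ≠ 0 := by
          intro h0
          exact hx (by show g 0 x • (h : C(X, E)) x = 0; simp [h0])
        exact hg0 (subset_closure hgx)
      · apply Set.eq_empty_iff_forall_notMem.mpr
        intro x ⟨hx1, hx2⟩
        have hgx : g 1 x ≠ 0 := by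
          intro h0
          exact hx1 (by show g 1 x • (h : C(X, E)) x = 0; simp [h0])
        exact (hf'coz hx2).2 (subset_closure hgx)
    -- support point property of x₁
    obtain ⟨f₁, hf₁coz, hf₁ne⟩ := hx₁ V₁ (hV₁o.mem_nhds hx₁V)
    rcases hf₁ne with hT1 | hS1
    · -- Case A : T f₁ y ≠ 0
      have hTf₁ : T f₁ y ≠ 0 := vne _ _ hT1
      obtain ⟨h, hh⟩ := hy₁.2
      have hSh : S h y ≠ 0 := vne _ _ hh
      obtain ⟨h1, h2, heq, hcoz1, hcoz2⟩ := decomp h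
      have hsplit : S h1 y ≠ 0 ∨ S h2 y ≠ 0 := by
        by_contra hc
        push_neg at hc
        apply hSh
        rw [heq, map_add]
        show S h1 y + S h2 y = 0
        rw [hc.1, hc.2, add_zero]
      rcases hsplit with hS | hS
      · exact sep f₁ h1 (cozd f₁ h1 hf₁coz hcoz1) y ⟨hTf₁, hS⟩
      · rcases hf'ne with hT' | hS'
        · exact sep f' h2 (by rw [Set.inter_comm]; exact hcoz2) y ⟨vne _ _ hT', hS⟩
        · exact sep f₁ f' (cozd f₁ f' hf₁coz hf'V₂) y ⟨hTf₁, vne _ _ hS'⟩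
    · -- Case B : S f₁ y ≠ 0
      have hSf₁ : S f₁ y ≠ 0 := vne _ _ hS1
      obtain ⟨h, hh⟩ := hy₁.1
      have hTh : T h y ≠ 0 := vne _ _ hh
      obtain ⟨h1, h2, heq, hcoz1, hcoz2⟩ := decomp h
      have hsplit : T h1 y ≠ 0 ∨ T h2 y ≠ 0 := by
        by_contra hc
        push_neg at hc
        apply hTh
        rw [heq, map_add]
        show T h1 y + T h2 y = 0
        rw [hc.1, hc.2, add_zero]
      rcases hsplit with hT | hT
      · exact sep h1 f₁ (by rw [Set.inter_comm]; exact cozd f₁ h1 hf₁coz hcoz1) y ⟨hT, hSf₁⟩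
      · rcases hf'ne with hT' | hS'
        · exact sep f' f₁ (by rw [Set.inter_comm]; exact cozd f₁ f' hf₁coz hf'V₂) y
            ⟨vne _ _ hT', hSf₁⟩
        · exact sep h2 f' hcoz2 y ⟨hT, vne _ _ hS'⟩
end

section
/- Suppose E is finite dimensional, A(X,E) contains the constant functions, and there exists a complete norm ‖·‖ on A(X,E) with ‖·‖ ≥ ‖·‖_∞ such that (A(X,E), ‖·‖) has property (P) and ‖g·f‖ ≤ ‖g‖_{A(X)} ‖f‖ for all g ∈ A(X) and f ∈ A(X,E). Let T, S : A(X,E) → C(Y,F) be jointly separating linear maps. Then φ(⋃_{v* ∈ F*} Y_d^{v*}) is a finite set consisting of limit (non-isolated) points of X, where for each v* ∈ F*, Y_d^{v*} = Y₁^{v*} ∖ (Y_cT^{v*} ∩ Y_cS^{v*}) and φ is the common support map on Y₁. -/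
/-!
If `f` vanishes near the support point `φ y`, then `v* (T f y) = v* (S f y) = 0`: after
multiplying by cut-off functions from `A(X)`, joint separation forbids anything else. So the
functionals `f ↦ v* (T f y)` and `f ↦ v* (S f y)` only see the germ of `f` at `φ y`. If `φ y` is
isolated, or (by property (P)) if the functional is bounded for the complete norm, it factors
through evaluation at `φ y`, hence is continuous because `E` is finite dimensional.
If `φ(⋃ Y_d^{v*})` were infinite, it would contain points `xₙ` with disjoint neighbourhoods
`Uₙ` carrying discontinuous, hence norm-unbounded, local functionals `ψₙ`. A gliding hump
`l = ∑ uₙ fₙ`, with `uₙ ∈ A(X)` supported in `Uₙ` and `fₙ` of small norm but large `ψₙ fₙ`,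
gives `|ψₙ l| ≥ n ‖v*ₙ‖ + 1`, against `|ψₙ l| ≤ ‖v*ₙ‖ (‖T l‖ + ‖S l‖)`.
-/

open Set Filter Topology

variable {X Y E F : Type*} [TopologicalSpace X] [CompactSpace X] [T2Space X]
  [TopologicalSpace Y] [CompactSpace Y] [T2Space Y]
  [NormedAddCommGroup E] [NormedSpace ℂ E] [CompleteSpace E]
  [NormedAddCommGroup F] [NormedSpace ℂ F] [CompleteSpace F]
  (A : Submodule ℂ C(X, E))

/-- `nn` is a complete norm on the subspace `A = A(X,E)` of `C(X,E)` dominating the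
sup norm. -/
structure IsCompleteNormOn {X E : Type*} [TopologicalSpace X] [CompactSpace X] [T2Space X]
    [NormedAddCommGroup E] [NormedSpace ℂ E]
    (A : Submodule ℂ C(X, E)) (nn : C(X, E) → ℝ) : Prop where
  nonneg : ∀ f ∈ A, 0 ≤ nn f
  add_le : ∀ f ∈ A, ∀ g ∈ A, nn (f + g) ≤ nn f + nn g
  smul : ∀ (c : ℂ), ∀ f ∈ A, nn (c • f) = ‖c‖ * nn f
  eq_zero_iff : ∀ f ∈ A, (nn f = 0 ↔ f = 0)
  sup_norm_le : ∀ f ∈ A, ‖f‖ ≤ nn f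
  complete : ∀ u : ℕ → C(X, E), (∀ n, u n ∈ A) →
    (∀ ε : ℝ, 0 < ε → ∃ N : ℕ, ∀ m ≥ N, ∀ n ≥ N, nn (u m - u n) < ε) →
    ∃ l ∈ A, ∀ ε : ℝ, 0 < ε → ∃ N : ℕ, ∀ n ≥ N, nn (u n - l) < ε

section

open Function

omit [CompleteSpace E] [CompleteSpace F]

theorem Set.Infinite.exists_seq_mem_isOpen_pairwise_disjoint {s : Set X} (hs : s.Infinite) :
    ∃ (x : ℕ → X) (U : ℕ → Set X), (∀ n, x n ∈ s) ∧ (∀ n, IsOpen (U n)) ∧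
      (∀ n, x n ∈ U n) ∧ Pairwise (Disjoint on U) := by
  obtain ⟨a, ha⟩ := hs.exists_accPt_principal
  have : Std.Symm (Disjoint on (Prod.snd : X × Set X → Set X)) := ⟨fun _ _ h => h.symm⟩
  -- every neighbourhood is chosen away from the accumulation point `a` of `s`
  obtain ⟨p, hp, hpd⟩ := exists_seq_of_forall_finset_exists'
    (fun p : X × Set X => p.1 ∈ s ∧ IsOpen p.2 ∧ p.1 ∈ p.2 ∧ p.2ᶜ ∈ 𝓝 a)
    (Disjoint on Prod.snd) fun t ht => by
      have hO : (⋂ q ∈ t, interior (q.2ᶜ)) ∈ 𝓝 a :=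
        (biInter_finset_mem t).2 fun q hq => interior_mem_nhds.2 (ht q hq).2.2.2
      obtain ⟨y, ⟨hyO, hys⟩, hya⟩ := accPt_iff_nhds.1 ha _ hO
      obtain ⟨V, W, hV, hW, hyV, haW, hVW⟩ := t2_separation hya
      refine ⟨(y, V ∩ ⋂ q ∈ t, interior (q.2ᶜ)),
        ⟨hys, hV.inter (isOpen_biInter_finset fun _ _ => isOpen_interior), ⟨hyV, hyO⟩,
          mem_of_superset (hW.mem_nhds haW) fun z hzW hz => disjoint_left.1 hVW hz.1 hzW⟩,
        fun q hq => disjoint_left.2 fun z hzq hz => ?_⟩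
      exact interior_subset (mem_iInter₂.1 hz.2 q hq) hzq
  exact ⟨fun n => (p n).1, fun n => (p n).2, fun n => (hp n).1, fun n => (hp n).2.1,
    fun n => (hp n).2.2.1, hpd⟩

theorem IsRegularBanachFunctionAlgebra.exists_tsupport_subset_eventually_eq_one
    {B : Subalgebra ℂ C(X, ℂ)} {nB : C(X, ℂ) → ℝ} (hB : IsRegularBanachFunctionAlgebra B nB)
    {V : Set X} (hV : IsOpen V) {x : X} (hx : x ∈ V) :
    ∃ u ∈ B, tsupport u ⊆ V ∧ ∀ᶠ z in 𝓝 x, u z = 1 := by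
  obtain ⟨t, ht, htc, htV⟩ := exists_mem_nhds_isClosed_subset (hV.mem_nhds hx)
  obtain ⟨g, hgB, hgV, hg1⟩ := hB.regular t htc.isCompact 1 (fun _ => V) (fun _ => hV)
    fun z hz => mem_iUnion.2 ⟨0, htV hz⟩
  exact ⟨g 0, hgB 0, hgV 0, mem_of_superset ht fun z hz => by simpa using hg1 z hz⟩

namespace IsCompleteNormOn

variable {A} {nn : C(X, E) → ℝ}

theorem nn_zero (hnn : IsCompleteNormOn A nn) : nn 0 = 0 :=
  (hnn.eq_zero_iff 0 A.zero_mem).2 rfl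

theorem nn_sub_comm (hnn : IsCompleteNormOn A nn) {f g : C(X, E)} (hf : f ∈ A) (hg : g ∈ A) :
    nn (f - g) = nn (g - f) := by
  simpa using hnn.smul (-1) (g - f) (A.sub_mem hg hf)

theorem nn_sum_le (hnn : IsCompleteNormOn A nn) {ι : Type*} (s : Finset ι) {g : ι → C(X, E)}
    (hg : ∀ i ∈ s, g i ∈ A) : nn (∑ i ∈ s, g i) ≤ ∑ i ∈ s, nn (g i) :=
  Finset.le_sum_of_subadditive_on_pred nn (· ∈ A) hnn.nn_zero.le
    (fun f g hf hg => hnn.add_le f hf g hg) (fun _ _ => A.add_mem) g hg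

theorem exists_nn_le_le_norm (hnn : IsCompleteNormOn A nn) (ψ : ↥A →ₗ[ℂ] ℂ)
    (hψ : ¬∃ C, ∀ f : ↥A, ‖ψ f‖ ≤ C * nn f) {δ : ℝ} (hδ : 0 < δ) (M : ℝ) :
    ∃ f : ↥A, nn f ≤ δ ∧ M ≤ ‖ψ f‖ := by
  push Not at hψ
  obtain ⟨f, hf⟩ := hψ (M / δ)
  have hf0 : 0 < nn f := by
    refine (hnn.nonneg _ f.2).lt_of_ne fun h => ?_
    obtain rfl : f = 0 := Subtype.ext ((hnn.eq_zero_iff _ f.2).1 h.symm)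
    simp [hnn.nn_zero] at hf
  set c : ℝ := δ / nn f with hc_def
  have hc : ‖(c : ℂ)‖ = c := by rw [Complex.norm_real, Real.norm_of_nonneg (by positivity)]
  refine ⟨(c : ℂ) • f, ?_, ?_⟩
  · rw [Submodule.coe_smul, hnn.smul _ _ f.2, hc, div_mul_cancel₀ δ hf0.ne']
  · calc M = c * (M / δ * nn f) := by rw [hc_def]; field_simp
      _ ≤ ‖ψ ((c : ℂ) • f)‖ := by rw [map_smul, norm_smul, hc]; gcongr

theorem exists_tendsto_sum_apply (hnn : IsCompleteNormOn A nn) {g : ℕ → C(X, E)}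
    (hg : ∀ k, g k ∈ A) (hgk : ∀ k, nn (g k) ≤ 2⁻¹ ^ k) :
    ∃ l ∈ A, ∀ z, Tendsto (fun N => (∑ k ∈ Finset.range N, g k) z) atTop (𝓝 (l z)) := by
  set s : ℕ → C(X, E) := fun N => ∑ k ∈ Finset.range N, g k
  have hs : ∀ N, s N ∈ A := fun N => A.sum_mem fun k _ => hg k
  have htail : ∀ k m, k ≤ m → nn (s m - s k) ≤ 2 * 2⁻¹ ^ k := fun k m hkm =>
    calc nn (s m - s k) = nn (∑ i ∈ Finset.Ico k m, g i) := by rw [Finset.sum_Ico_eq_sub _ hkm]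
      _ ≤ ∑ i ∈ Finset.Ico k m, nn (g i) := hnn.nn_sum_le _ fun i _ => hg i
      _ ≤ ∑ i ∈ Finset.Ico k m, (2⁻¹ : ℝ) ^ i := Finset.sum_le_sum fun i _ => hgk i
      _ ≤ 2⁻¹ ^ k / (1 - 2⁻¹) := geom_sum_Ico_le_of_lt_one (by norm_num) (by norm_num)
      _ = 2 * 2⁻¹ ^ k := by ring
  have hcauchy : ∀ ε > 0, ∃ N, ∀ m ≥ N, ∀ n ≥ N, nn (s m - s n) < ε := by
    intro ε hε
    obtain ⟨N, hN⟩ := exists_pow_lt_of_lt_one (half_pos hε) (by norm_num : (2 : ℝ)⁻¹ < 1)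
    have hsmall : ∀ k m, N ≤ k → k ≤ m → nn (s m - s k) < ε := fun k m hk hkm =>
      calc nn (s m - s k) ≤ 2 * 2⁻¹ ^ k := htail k m hkm
        _ ≤ 2 * 2⁻¹ ^ N := by
          gcongr 2 * ?_
          exact pow_le_pow_of_le_one (by norm_num) (by norm_num) hk
        _ < ε := by linarith
    refine ⟨N, fun m hm n hn => ?_⟩
    rcases le_total n m with h | h
    · exact hsmall n m hn h
    · rw [hnn.nn_sub_comm (hs m) (hs n)]
      exact hsmall m n hm h
  obtain ⟨l, hl, hlim⟩ := hnn.complete s hs hcauchy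
  refine ⟨l, hl, fun z => NormedAddCommGroup.tendsto_atTop.2 fun ε hε => ?_⟩
  obtain ⟨N, hN⟩ := hlim ε hε
  exact ⟨N, fun n hn => ((s n - l).norm_coe_le_norm z).trans_lt
    ((hnn.sup_norm_le _ (A.sub_mem (hs n) hl)).trans_lt (hN n hn))⟩

end IsCompleteNormOn

def IsLocalAt (ψ : ↥A →ₗ[ℂ] ℂ) (x : X) : Prop :=
  ∀ f : ↥A, (∀ᶠ z in 𝓝 x, (f : C(X, E)) z = 0) → ψ f = 0

omit [CompactSpace X] [T2Space X] in
theorem continuous_of_eval_eq_zero_imp_apply_eq_zero [FiniteDimensional ℂ E]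
    (hconst : ∀ e : E, ContinuousMap.const X e ∈ A) (ψ : ↥A →ₗ[ℂ] ℂ) (x : X)
    (hψ : ∀ f : ↥A, (f : C(X, E)) x = 0 → ψ f = 0) : Continuous ψ := by
  let c : E →ₗ[ℂ] ↥A :=
    { toFun e := ⟨.const X e, hconst e⟩
      map_add' _ _ := rfl
      map_smul' _ _ := rfl }
  have h : ⇑ψ = (ψ ∘ₗ c) ∘ fun f : ↥A => (f : C(X, E)) x := funext fun f => by
    have := hψ (f - c ((f : C(X, E)) x)) (sub_self _)
    rwa [map_sub, sub_eq_zero] at this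
  rw [h]
  exact (ψ ∘ₗ c).continuous_of_finiteDimensional.comp
    ((continuous_eval_const x).comp continuous_subtype_val)

namespace IsLocalAt

variable {A} {ψ : ↥A →ₗ[ℂ] ℂ} {x : X}

omit [CompactSpace X] [T2Space X] in
theorem continuous_of_isOpen_singleton [FiniteDimensional ℂ E]
    (hconst : ∀ e : E, ContinuousMap.const X e ∈ A) (hψ : IsLocalAt A ψ x)
    (hx : IsOpen ({x} : Set X)) : Continuous ψ :=
  continuous_of_eval_eq_zero_imp_apply_eq_zero A hconst ψ x fun f hf =>
    hψ f (mem_of_superset (hx.mem_nhds rfl) fun z hz => by rwa [mem_singleton_iff.1 hz])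

theorem apply_eq_zero_of_bounded {nn : C(X, E) → ℝ} (hnn : IsCompleteNormOn A nn)
    (hP : HasPropertyP A nn) (hψ : IsLocalAt A ψ x) {C : ℝ} (hC : ∀ f : ↥A, ‖ψ f‖ ≤ C * nn f)
    {f : ↥A} (hfx : (f : C(X, E)) x = 0) : ψ f = 0 := by
  obtain ⟨w, hwA, hw0, hwf⟩ := hP f x hfx
  have hle : ∀ n, ‖ψ f‖ ≤ C * nn (w n - f) := fun n =>
    calc ‖ψ f‖ = ‖ψ (f - ⟨w n, hwA n⟩)‖ := by rw [map_sub, hψ ⟨w n, hwA n⟩ (hw0 n), sub_zero]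
      _ ≤ C * nn (f - w n) := hC _
      _ = C * nn (w n - f) := by rw [hnn.nn_sub_comm f.2 (hwA n)]
  have := ge_of_tendsto' (hwf.const_mul C) hle
  rw [mul_zero] at this
  exact norm_le_zero_iff.1 this

theorem continuous_of_bounded [FiniteDimensional ℂ E]
    (hconst : ∀ e : E, ContinuousMap.const X e ∈ A) {nn : C(X, E) → ℝ}
    (hnn : IsCompleteNormOn A nn) (hP : HasPropertyP A nn) (hψ : IsLocalAt A ψ x)
    (hC : ∃ C, ∀ f : ↥A, ‖ψ f‖ ≤ C * nn f) : Continuous ψ :=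
  let ⟨_, hC⟩ := hC
  continuous_of_eval_eq_zero_imp_apply_eq_zero A hconst ψ x fun _ =>
    hψ.apply_eq_zero_of_bounded hnn hP hC

theorem exists_nn_le_supported_le_norm {B : Subalgebra ℂ C(X, ℂ)} {nB : C(X, ℂ) → ℝ}
    (hB : IsRegularBanachFunctionAlgebra B nB) (hmod : ∀ g ∈ B, ∀ f : ↥A, g • (f : C(X, E)) ∈ A)
    {nn : C(X, E) → ℝ} (hnn : IsCompleteNormOn A nn)
    (hsubmul : ∀ g ∈ B, ∀ f : ↥A, nn (g • (f : C(X, E))) ≤ nB g * nn (f : C(X, E)))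
    (hψ : IsLocalAt A ψ x) (hunb : ¬∃ C, ∀ f : ↥A, ‖ψ f‖ ≤ C * nn f)
    {U : Set X} (hU : IsOpen U) (hxU : x ∈ U) {δ : ℝ} (hδ : 0 < δ) (M : ℝ) :
    ∃ g : ↥A, nn g ≤ δ ∧ (∀ z ∉ U, (g : C(X, E)) z = 0) ∧ M ≤ ‖ψ g‖ := by
  obtain ⟨u, huB, huU, hu1⟩ := hB.exists_tsupport_subset_eventually_eq_one hU hxU
  have hnB : 0 ≤ nB u := hB.norm_nonneg u huB
  obtain ⟨f, hfδ, hfM⟩ :=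
    hnn.exists_nn_le_le_norm ψ hunb (δ := δ / (nB u + 1)) (by positivity) M
  refine ⟨⟨u • f, hmod u huB f⟩, ?_, fun z hz => ?_, hfM.trans_eq ?_⟩
  · calc nn (u • f) ≤ nB u * nn f := hsubmul u huB f
      _ ≤ nB u * (δ / (nB u + 1)) := by gcongr
      _ ≤ δ := by
        rw [mul_div_assoc', div_le_iff₀ (by positivity)]
        nlinarith
  · simp [image_eq_zero_of_notMem_tsupport fun h => hz (huU h)]
  · have := hψ (f - ⟨u • f, hmod u huB f⟩) (hu1.mono fun z hz => by simp [hz])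
    rw [map_sub, sub_eq_zero] at this
    rw [this]

end IsLocalAt

theorem exists_forall_le_norm_apply {B : Subalgebra ℂ C(X, ℂ)} {nB : C(X, ℂ) → ℝ}
    (hB : IsRegularBanachFunctionAlgebra B nB) (hmod : ∀ g ∈ B, ∀ f : ↥A, g • (f : C(X, E)) ∈ A)
    {nn : C(X, E) → ℝ} (hnn : IsCompleteNormOn A nn)
    (hsubmul : ∀ g ∈ B, ∀ f : ↥A, nn (g • (f : C(X, E))) ≤ nB g * nn (f : C(X, E)))
    {x : ℕ → X} {U : ℕ → Set X} (hU : ∀ n, IsOpen (U n)) (hxU : ∀ n, x n ∈ U n)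
    (hUd : Pairwise (Disjoint on U)) {ψ : ℕ → ↥A →ₗ[ℂ] ℂ} (hψ : ∀ n, IsLocalAt A (ψ n) (x n))
    (hunb : ∀ n, ¬∃ C, ∀ f : ↥A, ‖ψ n f‖ ≤ C * nn f) (M : ℕ → ℝ) :
    ∃ l : ↥A, ∀ n, M n ≤ ‖ψ n l‖ := by
  choose g hgnn hgU hgM using fun n => (hψ n).exists_nn_le_supported_le_norm hB hmod hnn
    hsubmul (hunb n) (hU n) (hxU n) (pow_pos (by norm_num : (0 : ℝ) < 2⁻¹) n) (M n)
  obtain ⟨l, hl, hlim⟩ := hnn.exists_tendsto_sum_apply (fun k => (g k).2) hgnn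
  have hlg : ∀ n, ∀ z ∈ U n, l z = (g n : C(X, E)) z := fun n z hz =>
    tendsto_nhds_unique (hlim z) <| tendsto_atTop_of_eventually_const (i₀ := n + 1) fun N hN => by
      rw [ContinuousMap.coe_sum, Finset.sum_apply]
      exact Finset.sum_eq_single_of_mem n (Finset.mem_range.2 hN) fun k _ hk =>
        hgU k z fun hzk => disjoint_left.1 (hUd hk) hzk hz
  refine ⟨⟨l, hl⟩, fun n => (hgM n).trans_eq ?_⟩
  have := hψ n (⟨l, hl⟩ - g n)
    (mem_of_superset ((hU n).mem_nhds (hxU n)) fun z hz => by simp [hlg n z hz])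
  rw [map_sub, sub_eq_zero] at this
  rw [this]

namespace JointlySeparatingV

variable {A} {T S : ↥A →ₗ[ℂ] C(Y, F)}

omit [CompactSpace X] [T2Space X] [CompactSpace Y] [T2Space Y] in
theorem symm (h : JointlySeparatingV A T S) : JointlySeparatingV A S T := fun f g hfg => by
  rw [inter_comm]
  exact h g f (by rwa [inter_comm])

omit [CompactSpace X] [T2Space X] [CompactSpace Y] [T2Space Y] in
theorem apply_eq_zero (h : JointlySeparatingV A T S) {f g : ↥A}
    (hfg : ∀ z, (f : C(X, E)) z ≠ 0 → (g : C(X, E)) z = 0) {y : Y} (hf : T f y ≠ 0) :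
    S g y = 0 := by
  by_contra hg
  exact eq_empty_iff_forall_notMem.1
    (h f g (eq_empty_iff_forall_notMem.2 fun z hz => hz.2 (hfg z hz.1))) y ⟨hf, hg⟩

omit [CompactSpace Y] [T2Space Y] in
theorem apply_eq_zero_of_isSupportPointFor {B : Subalgebra ℂ C(X, ℂ)} {nB : C(X, ℂ) → ℝ}
    (hB : IsRegularBanachFunctionAlgebra B nB) (hmod : ∀ g ∈ B, ∀ f : ↥A, g • (f : C(X, E)) ∈ A)
    (hTS : JointlySeparatingV A T S) (v : F →L[ℂ] ℂ) {y : Y} {x : X}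
    (hyS : ∃ h : ↥A, v (S h y) ≠ 0)
    (hx : IsSupportPointFor A (fun f y => v (T f y)) (fun f y => v (S f y)) y x)
    {f : ↥A} (hf : ∀ᶠ z in 𝓝 x, (f : C(X, E)) z = 0) : v (T f y) = 0 := by
  obtain ⟨V, hfV, hV, hxV⟩ := eventually_nhds_iff.1 hf
  obtain ⟨u, huB, huV, hu1⟩ := hB.exists_tsupport_subset_eventually_eq_one hV hxV
  have hfu : ∀ z, (f : C(X, E)) z ≠ 0 → u z = 0 := fun z hz =>
    image_eq_zero_of_notMem_tsupport fun h => hz (hfV z (huV h))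
  obtain ⟨h, hh⟩ := hyS
  by_contra hTf
  replace hTf : T f y ≠ 0 := ne_zero_of_map hTf
  let uh : ↥A := ⟨u • h, hmod u huB h⟩
  -- `u • h` lives where `f` vanishes, `h - u • h` where `u = 1`
  have hSuh : S uh y = 0 := hTS.apply_eq_zero (fun z hz => by simp [uh, hfu z hz]) hTf
  obtain ⟨g, hgu, hg | hg⟩ := hx _ hu1 <;> beta_reduce at hg
  · have hSh : S (h - uh) y = 0 :=
      hTS.apply_eq_zero (fun z hz => by simp [uh, show u z = 1 from hgu hz]) (ne_zero_of_map hg)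
    apply hh
    rw [show h = uh + (h - uh) by abel, map_add, ContinuousMap.add_apply, hSuh, hSh, add_zero,
      map_zero]
  · refine hg ?_
    rw [hTS.apply_eq_zero (fun z hz => ?_) hTf, map_zero]
    by_contra hgz
    exact one_ne_zero ((show u z = 1 from hgu hgz).symm.trans (hfu z hz))

end JointlySeparatingV

noncomputable def pointFunctional (R : ↥A →ₗ[ℂ] C(Y, F)) (v : F →L[ℂ] ℂ) (y : Y) :
    ↥A →ₗ[ℂ] ℂ :=
  ((v.comp (ContinuousMap.evalCLM ℂ y) : C(Y, F) →L[ℂ] ℂ) : C(Y, F) →ₗ[ℂ] ℂ) ∘ₗ R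

omit [CompactSpace X] [T2Space X] [T2Space Y] in
theorem norm_pointFunctional_apply_le (R : ↥A →ₗ[ℂ] C(Y, F)) (v : F →L[ℂ] ℂ) (y : Y) (f : ↥A) :
    ‖pointFunctional A R v y f‖ ≤ ‖v‖ * ‖R f‖ :=
  (v.le_opNorm _).trans (by gcongr; exact (R f).norm_coe_le_norm y)

omit [CompactSpace Y] [T2Space Y] in
theorem isLocalAt_pointFunctional {B : Subalgebra ℂ C(X, ℂ)} {nB : C(X, ℂ) → ℝ}
    (hB : IsRegularBanachFunctionAlgebra B nB) (hmod : ∀ g ∈ B, ∀ f : ↥A, g • (f : C(X, E)) ∈ A)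
    {T S : ↥A →ₗ[ℂ] C(Y, F)} (hTS : JointlySeparatingV A T S) {v : F →L[ℂ] ℂ} {y : Y} {x : X}
    (hy : y ∈ Y1v A T S v)
    (hx : IsSupportPointFor A (fun f y => v (T f y)) (fun f y => v (S f y)) y x) :
    IsLocalAt A (pointFunctional A T v y) x ∧ IsLocalAt A (pointFunctional A S v y) x :=
  ⟨fun _ hf => hTS.apply_eq_zero_of_isSupportPointFor hB hmod v hy.2 hx hf,
    fun _ hf => hTS.symm.apply_eq_zero_of_isSupportPointFor hB hmod v hy.1
      (fun V hV => (hx V hV).imp fun _ h => ⟨h.1, h.2.symm⟩) hf⟩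

end

/-- **Theorem 4.5 (ii).** Suppose `E` is finite dimensional, `A(X,E)` contains the
constants and carries a complete norm `nn ≥ ‖·‖_∞` with property (P) and
`nn(g·f) ≤ ‖g‖_{A(X)} nn(f)`.  For jointly separating `T, S : A(X,E) → C(Y,F)`,
the set `φ(⋃_{v*} Y_d^{v*})` is finite and consists of limit (non-isolated) points
of `X`. -/
theorem image_YdUnion_finite
    [FiniteDimensional ℂ E]
    (B : Subalgebra ℂ C(X, ℂ)) (nB : C(X, ℂ) → ℝ)
    (hB : IsRegularBanachFunctionAlgebra B nB)
    (hmod : ∀ g ∈ B, ∀ f : ↥A, g • (f : C(X, E)) ∈ A)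
    (hconst : ∀ e : E, ContinuousMap.const X e ∈ A)
    (nn : C(X, E) → ℝ) (hnn : IsCompleteNormOn A nn)
    (hP : HasPropertyP A nn)
    (hsubmul : ∀ g ∈ B, ∀ f : ↥A, nn (g • (f : C(X, E))) ≤ nB g * nn (f : C(X, E)))
    (T S : ↥A →ₗ[ℂ] C(Y, F)) (hTS : JointlySeparatingV A T S)
    (φ : Y → X)
    (hφ : ∀ v : F →L[ℂ] ℂ, ∀ y ∈ Y1v A T S v,
      IsSupportPointFor A (fun f y => v (T f y)) (fun f y => v (S f y)) y (φ y)) :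
    ∀ D : Set Y,
      D = ⋃ v : F →L[ℂ] ℂ, (Y1v A T S v \
          ({y ∈ Y1v A T S v | Continuous fun f : ↥A => v (T f y)} ∩
            {y ∈ Y1v A T S v | Continuous fun f : ↥A => v (S f y)})) →
      (φ '' D).Finite ∧ ∀ x ∈ φ '' D, (𝓝[≠] x).NeBot := by
  intro D hD
  have hYd : ∀ y ∈ D, ∃ v R, (R = T ∨ R = S) ∧ IsLocalAt A (pointFunctional A R v y) (φ y) ∧
      ¬Continuous (pointFunctional A R v y) := by
    intro y hy
    obtain ⟨v, hy1, hc⟩ := mem_iUnion.1 (hD ▸ hy)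
    obtain ⟨hT, hS⟩ := isLocalAt_pointFunctional A hB hmod hTS hy1 (hφ v y hy1)
    by_cases hcT : Continuous (pointFunctional A T v y)
    · exact ⟨v, S, Or.inr rfl, hS, fun hcS => hc ⟨⟨hy1, hcT⟩, hy1, hcS⟩⟩
    · exact ⟨v, T, Or.inl rfl, hT, hcT⟩
  refine ⟨not_infinite.1 fun hinf => ?_, ?_⟩
  · obtain ⟨x, U, hxD, hU, hxU, hUd⟩ := hinf.exists_seq_mem_isOpen_pairwise_disjoint
    choose y hyD hyx using hxD
    choose v R hR hloc hnc using fun n => hYd (y n) (hyD n)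
    obtain ⟨l, hl⟩ := exists_forall_le_norm_apply A hB hmod hnn hsubmul hU hxU hUd
      (fun n => hyx n ▸ hloc n)
      (fun n hC => hnc n ((hloc n).continuous_of_bounded hconst hnn hP hC))
      (fun n => ‖v n‖ * n + 1)
    obtain ⟨n, hn⟩ := exists_nat_gt (‖T l‖ + ‖S l‖)
    have hRl : ‖R n l‖ ≤ n := by
      rcases hR n with h | h <;> rw [h] <;> linarith [norm_nonneg (T l), norm_nonneg (S l)]
    have := (hl n).trans ((norm_pointFunctional_apply_le A (R n) (v n) (y n) l).trans
      (mul_le_mul_of_nonneg_left hRl (norm_nonneg _)))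
    linarith
  · rintro _ ⟨y, hy, rfl⟩
    obtain ⟨v, R, -, hloc, hnc⟩ := hYd y hy
    by_contra h
    exact hnc (hloc.continuous_of_isOpen_singleton hconst
      ((isOpen_singleton_iff_punctured_nhds _).2 (not_neBot.1 h)))
end
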